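/- arXiv:1201.2803 — 6 statements merged into one kernel-verified Lean document; each statement's English description precedes it below -/
import Mathlib

section
/- Let n ≥ 2, let C = {C_1,…,C_K} be a clustering of {1,…,n}, and let A(1), A(2), …, A(n−1) be n×n stochastic matrices such that every A(t) has all diagonal entries positive and has cluster-spanning-trees w.r.t. C. Then the product A(n−1)A(n−2)···A(1) is cluster-scrambling w.r.t. C, that is, μ_C(A(n−1)A(n−2)···A(1)) > 0. -/
open Finset Filter Topology Matrix

/-- An `n × n` real matrix is stochastic if all entries are nonnegative and
every row sums to `1`. -/
def IsStochastic {n : ℕ} (A : Matrix (Fin n) (Fin n) ℝ) : Prop :=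
  (∀ i j, 0 ≤ A i j) ∧ ∀ i, ∑ j, A i j = 1

/-- A clustering of `{1,…,n}`: pairwise disjoint subsets whose union is everything. -/
def IsClustering {n K : ℕ} (C : Fin K → Finset (Fin n)) : Prop :=
  (∀ p q, p ≠ q → Disjoint (C p) (C q)) ∧ ∀ i, ∃ p, i ∈ C p

/-- Reachability along directed edges of `G(A)`: edge from `j` to `i` iff `A i j > 0`. -/
def Reaches {n : ℕ} (A : Matrix (Fin n) (Fin n) ℝ) : Fin n → Fin n → Prop :=
  Relation.ReflTransGen fun j i => 0 < A i j

/-- `A` has cluster-spanning-trees w.r.t. `C`: for each cluster there is a vertex from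
which every vertex of the cluster is reachable in `G(A)`. -/
def HasClusterSpanningTrees {n K : ℕ} (C : Fin K → Finset (Fin n))
    (A : Matrix (Fin n) (Fin n) ℝ) : Prop :=
  ∀ p, ∃ v, ∀ i ∈ C p, Reaches A v i

/-- Inter-cluster common influence: `∑_{j ∈ C q} A i j` is the same for all `i ∈ C p`. -/
def InterClusterCommonInfluence {n K : ℕ} (C : Fin K → Finset (Fin n))
    (A : Matrix (Fin n) (Fin n) ℝ) : Prop :=
  ∀ p q, ∀ i ∈ C p, ∀ i' ∈ C p, ∑ j ∈ C q, A i j = ∑ j ∈ C q, A i' j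

/-- Cluster ergodicity coefficient
`μ_C(A) = min_p min_{i,j ∈ C p} ∑_k min (A i k) (A j k)`. -/
noncomputable def muC {n K : ℕ} (C : Fin K → Finset (Fin n))
    (A : Matrix (Fin n) (Fin n) ℝ) : ℝ :=
  sInf {s | ∃ p, ∃ i ∈ C p, ∃ j ∈ C p, s = ∑ k, min (A i k) (A j k)}

/-- Cluster Hajnal diameter `Δ_C(A) = max_p max_{i,j ∈ C p} max_k |A i k - A j k|`. -/
noncomputable def DeltaC {n K : ℕ} (C : Fin K → Finset (Fin n))
    (A : Matrix (Fin n) (Fin n) ℝ) : ℝ :=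
  sSup {d | ∃ p, ∃ i ∈ C p, ∃ j ∈ C p, ∃ k, d = |A i k - A j k|}

/-- The cluster-consensus subspace `S_C`. -/
def SC {n K : ℕ} (C : Fin K → Finset (Fin n)) : Set (Fin n → ℝ) :=
  {x | ∀ p, ∀ i ∈ C p, ∀ j ∈ C p, x i = x j}

/-- Left product `prodFrom A a m = A (a+m-1) * ⋯ * A (a+1) * A a` (with `m` factors). -/
def prodFrom {n : ℕ} (A : ℕ → Matrix (Fin n) (Fin n) ℝ) (a : ℕ) :
    ℕ → Matrix (Fin n) (Fin n) ℝ
  | 0 => 1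
  | m + 1 => A (a + m) * prodFrom A a m

section Aux

variable {n : ℕ}

lemma prodFrom_succ_left (A : ℕ → Matrix (Fin n) (Fin n) ℝ) (a m : ℕ) :
    prodFrom A a (m + 1) = prodFrom A (a + 1) m * A a := by
  induction m with
  | zero => simp [prodFrom]
  | succ m ih =>
      show A (a + (m+1)) * prodFrom A a (m+1) = prodFrom A (a+1) (m+1) * A a
      rw [ih, show prodFrom A (a+1) (m+1) = A (a+1+m) * prodFrom A (a+1) m from rfl,
        Matrix.mul_assoc, show a + (m+1) = a+1+m by omega]

lemma prodFrom_nonneg (A : ℕ → Matrix (Fin n) (Fin n) ℝ) (a r : ℕ)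
    (h : ∀ t, a ≤ t → t < a + r → ∀ i j, 0 ≤ A t i j) :
    ∀ i j, 0 ≤ prodFrom A a r i j := by
  induction r with
  | zero =>
      intro i j
      show (0:ℝ) ≤ (1 : Matrix (Fin n) (Fin n) ℝ) i j
      rw [Matrix.one_apply]; split <;> norm_num
  | succ r ih =>
      intro i j
      show (0:ℝ) ≤ (A (a + r) * prodFrom A a r) i j
      rw [Matrix.mul_apply]
      refine Finset.sum_nonneg fun k _ => mul_nonneg (h (a+r) (by omega) (by omega) i k)
        (ih (fun t ht1 ht2 => h t ht1 (by omega)) k j)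

lemma prodFrom_diag_pos (A : ℕ → Matrix (Fin n) (Fin n) ℝ) (a r : ℕ)
    (h : ∀ t, a ≤ t → t < a + r → ∀ i j, 0 ≤ A t i j)
    (hd : ∀ t, a ≤ t → t < a + r → ∀ i, 0 < A t i i) :
    ∀ i, 0 < prodFrom A a r i i := by
  induction r with
  | zero =>
      intro i
      show (0:ℝ) < (1 : Matrix (Fin n) (Fin n) ℝ) i i
      simp [Matrix.one_apply]
  | succ r ih =>
      intro i
      show (0:ℝ) < (A (a + r) * prodFrom A a r) i i
      rw [Matrix.mul_apply]
      have h' : ∀ t, a ≤ t → t < a + r → ∀ i j, 0 ≤ A t i j :=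
        fun t ht1 ht2 => h t ht1 (by omega)
      have hterm : (0:ℝ) < A (a+r) i i * prodFrom A a r i i :=
        mul_pos (hd (a+r) (by omega) (by omega) i)
          (ih h' (fun t ht1 ht2 => hd t ht1 (by omega)) i)
      refine lt_of_lt_of_le hterm (Finset.single_le_sum
        (fun k _ => mul_nonneg (h (a+r) (by omega) (by omega) i k)
          (prodFrom_nonneg A a r h' k i)) (Finset.mem_univ i))

open scoped Classical in
/-- `Tset A m i s` : the set of `k` such that `(A m ⋯ A (s+1)) i k > 0`. -/
noncomputable def Tset (A : ℕ → Matrix (Fin n) (Fin n) ℝ) (m : ℕ) (i : Fin n) (s : ℕ) :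
    Finset (Fin n) :=
  Finset.univ.filter (fun k => 0 < prodFrom A (s+1) (m - s) i k)

lemma mem_Tset {A : ℕ → Matrix (Fin n) (Fin n) ℝ} {m : ℕ} {i k : Fin n} {s : ℕ} :
    k ∈ Tset A m i s ↔ 0 < prodFrom A (s+1) (m - s) i k := by
  simp [Tset]

section WithHyps

variable {A : ℕ → Matrix (Fin n) (Fin n) ℝ} {m : ℕ}
  (hst : ∀ t, 1 ≤ t → t ≤ m → ∀ i j, 0 ≤ A t i j)
  (hdg : ∀ t, 1 ≤ t → t ≤ m → ∀ i, 0 < A t i i)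

include hst in
lemma Q_nonneg {s : ℕ} (hs : s ≤ m) : ∀ i k, 0 ≤ prodFrom A (s+1) (m-s) i k :=
  prodFrom_nonneg A (s+1) (m-s) (fun t ht1 ht2 => hst t (by omega) (by omega))

include hst hdg in
lemma mem_Tset_self {s : ℕ} (hs : s ≤ m) (i : Fin n) : i ∈ Tset A m i s := by
  rw [mem_Tset]
  exact prodFrom_diag_pos A (s+1) (m-s) (fun t ht1 ht2 => hst t (by omega) (by omega))
    (fun t ht1 ht2 => hdg t (by omega) (by omega)) i

include hst hdg in
lemma Tset_step {s : ℕ} (hs : s < m) {i w u : Fin n}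
    (hw : w ∈ Tset A m i (s+1)) (hwu : 0 < A (s+1) w u) : u ∈ Tset A m i s := by
  rw [mem_Tset] at hw ⊢
  have heq : m - s = (m - (s+1)) + 1 := by omega
  rw [heq, prodFrom_succ_left, Matrix.mul_apply]
  have hQnn := Q_nonneg hst (show s+1 ≤ m by omega) (A := A)
  refine lt_of_lt_of_le (mul_pos hw hwu) ?_
  exact Finset.single_le_sum
    (fun j _ => mul_nonneg (hQnn i j) (hst (s+1) (by omega) (by omega) j u))
    (Finset.mem_univ w)

include hst hdg in
lemma Tset_mono_succ {s : ℕ} (hs : s < m) (i : Fin n) :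
    Tset A m i (s+1) ⊆ Tset A m i s := fun k hk =>
  Tset_step hst hdg hs hk (hdg (s+1) (by omega) (by omega) k)

include hst hdg in
lemma Tset_le_zero {s : ℕ} (hs : s ≤ m) (i : Fin n) :
    Tset A m i s ⊆ Tset A m i 0 := by
  induction s with
  | zero => exact Finset.Subset.refl _
  | succ s ih =>
      exact (Tset_mono_succ hst hdg (by omega) i).trans (ih (by omega))

end WithHyps

lemma exists_boundary {α : Type*} (e : α → α → Prop) (S : Finset α) :
    ∀ v i, Relation.ReflTransGen e v i → i ∈ S → v ∉ S →
      ∃ u w, u ∉ S ∧ w ∈ S ∧ e u w := by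
  intro v i h
  induction h with
  | refl => intro hi hv; exact absurd hi hv
  | @tail b c _ hbc ih =>
      intro hc hv
      by_cases hb : b ∈ S
      · exact ih hb hv
      · exact ⟨b, c, hb, hc, hbc⟩

end Aux
section Main

variable {n K : ℕ} {C : Fin K → Finset (Fin n)} {A : ℕ → Matrix (Fin n) (Fin n) ℝ} {m : ℕ}
  (hst : ∀ t, 1 ≤ t → t ≤ m → ∀ i j, 0 ≤ A t i j)
  (hdg : ∀ t, 1 ≤ t → t ≤ m → ∀ i, 0 < A t i i)
  (htree : ∀ t, 1 ≤ t → t ≤ m → HasClusterSpanningTrees C (A t))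

include hst hdg htree in
lemma Tset_growth {p : Fin K} {i j : Fin n} (hi : i ∈ C p) (hj : j ∈ C p)
    {s : ℕ} (hs : s < m)
    (hdis : Disjoint (Tset A m i (s+1)) (Tset A m j (s+1))) :
    (Tset A m i (s+1)).card + (Tset A m j (s+1)).card + 1
      ≤ (Tset A m i s).card + (Tset A m j s).card := by
  obtain ⟨v, hv⟩ := htree (s+1) (by omega) (by omega) p
  have hgrow : ∀ x : Fin n, x ∈ C p → v ∉ Tset A m x (s+1) →
      (Tset A m x (s+1)).card < (Tset A m x s).card := by
    intro x hx hvx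
    obtain ⟨u, w, hu, hw, he⟩ := exists_boundary (fun a b => 0 < A (s+1) b a)
      (Tset A m x (s+1)) v x (hv x hx) (mem_Tset_self hst hdg (by omega) x) hvx
    have husub : u ∈ Tset A m x s := Tset_step hst hdg hs hw he
    refine Finset.card_lt_card ?_
    rw [Finset.ssubset_def]
    exact ⟨Tset_mono_succ hst hdg hs x, fun hsub => hu (hsub husub)⟩
  by_cases hvi : v ∈ Tset A m i (s+1)
  · have hvj : v ∉ Tset A m j (s+1) := Finset.disjoint_left.mp hdis hvi
    have h1 := hgrow j hj hvj
    have h2 := Finset.card_le_card (Tset_mono_succ hst hdg hs i)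
    omega
  · have h1 := hgrow i hi hvi
    have h2 := Finset.card_le_card (Tset_mono_succ hst hdg hs j)
    omega

include hst hdg htree in
lemma Tset_main_ind {p : Fin K} {i j : Fin n} (hi : i ∈ C p) (hj : j ∈ C p)
    (hdis : Disjoint (Tset A m i 0) (Tset A m j 0)) :
    ∀ r, r ≤ m → 2 + r ≤ (Tset A m i (m - r)).card + (Tset A m j (m - r)).card := by
  intro r
  induction r with
  | zero =>
      intro _
      have h1 : 0 < (Tset A m i (m - 0)).card :=
        Finset.card_pos.mpr ⟨i, by simpa using mem_Tset_self hst hdg le_rfl i⟩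
      have h2 : 0 < (Tset A m j (m - 0)).card :=
        Finset.card_pos.mpr ⟨j, by simpa using mem_Tset_self hst hdg le_rfl j⟩
      omega
  | succ r ih =>
      intro hr
      set s := m - (r+1) with hsdef
      have hs : s < m := by omega
      have heq : s + 1 = m - r := by omega
      have hdis' : Disjoint (Tset A m i (s+1)) (Tset A m j (s+1)) :=
        Disjoint.mono (Tset_le_zero hst hdg (by omega) i)
          (Tset_le_zero hst hdg (by omega) j) hdis
      have hg := Tset_growth hst hdg htree hi hj hs hdis'
      have hih := ih (by omega)
      rw [← heq] at hih
      omega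

include hst hdg htree in
lemma Tset_key (hm : 1 ≤ m) (hnm : n = m + 1) {p : Fin K} {i j : Fin n}
    (hi : i ∈ C p) (hj : j ∈ C p) :
    ∃ k, 0 < prodFrom A 1 m i k ∧ 0 < prodFrom A 1 m j k := by
  have hnd : ¬ Disjoint (Tset A m i 0) (Tset A m j 0) := by
    intro hdis
    have h := Tset_main_ind hst hdg htree hi hj hdis m le_rfl
    simp only [Nat.sub_self] at h
    have hcard : (Tset A m i 0).card + (Tset A m j 0).card
        = (Tset A m i 0 ∪ Tset A m j 0).card :=
      (Finset.card_union_of_disjoint hdis).symm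
    have hle : (Tset A m i 0 ∪ Tset A m j 0).card ≤ n := by
      simpa using Finset.card_le_univ (Tset A m i 0 ∪ Tset A m j 0)
    omega
  obtain ⟨k, hk1, hk2⟩ := Finset.not_disjoint_iff.mp hnd
  rw [mem_Tset] at hk1 hk2
  simp only [Nat.sub_zero] at hk1 hk2
  exact ⟨k, hk1, hk2⟩

end Main

theorem stmt0 {n K : ℕ} (hn : 2 ≤ n) (C : Fin K → Finset (Fin n))
    (hC : IsClustering C) (A : ℕ → Matrix (Fin n) (Fin n) ℝ)
    (hA : ∀ t, 1 ≤ t → t ≤ n - 1 →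
      IsStochastic (A t) ∧ (∀ i, 0 < A t i i) ∧ HasClusterSpanningTrees C (A t)) :
    0 < muC C (prodFrom A 1 (n - 1)) := by
  set m := n - 1 with hm
  have hm1 : 1 ≤ m := by omega
  have hnm : n = m + 1 := by omega
  have hst : ∀ t, 1 ≤ t → t ≤ m → ∀ i j, 0 ≤ A t i j :=
    fun t h1 h2 => (hA t h1 h2).1.1
  have hdg : ∀ t, 1 ≤ t → t ≤ m → ∀ i, 0 < A t i i :=
    fun t h1 h2 => (hA t h1 h2).2.1
  have htree : ∀ t, 1 ≤ t → t ≤ m → HasClusterSpanningTrees C (A t) :=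
    fun t h1 h2 => (hA t h1 h2).2.2
  have hPnn : ∀ i k, 0 ≤ prodFrom A 1 m i k :=
    prodFrom_nonneg A 1 m (fun t ht1 ht2 => hst t (by omega) (by omega))
  set S : Set ℝ :=
    {s | ∃ p, ∃ i ∈ C p, ∃ j ∈ C p, s = ∑ k, min (prodFrom A 1 m i k) (prodFrom A 1 m j k)}
    with hS
  have hpos : ∀ s ∈ S, 0 < s := by
    rintro s ⟨p, i, hi, j, hj, rfl⟩
    obtain ⟨k, hk1, hk2⟩ := Tset_key hst hdg htree hm1 hnm hi hj
    refine Finset.sum_pos' (fun k' _ => le_min (hPnn i k') (hPnn j k')) ?_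
    exact ⟨k, Finset.mem_univ k, lt_min hk1 hk2⟩
  have hne : S.Nonempty := by
    have i0 : Fin n := ⟨0, by omega⟩
    obtain ⟨p, hp⟩ := hC.2 i0
    exact ⟨_, p, i0, hp, i0, hp, rfl⟩
  have hfin : S.Finite := by
    refine Set.Finite.subset (Set.finite_range
      (fun x : Fin K × Fin n × Fin n =>
        ∑ k, min (prodFrom A 1 m x.2.1 k) (prodFrom A 1 m x.2.2 k))) ?_
    rintro s ⟨p, i, hi, j, hj, rfl⟩
    exact ⟨(p, i, j), rfl⟩
  have hmem : sInf S ∈ S := hne.csInf_mem hfin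
  exact hpos _ hmem
end

section
/- If A is an n×n stochastic matrix with all diagonal entries positive, then the sequence of powers A^t converges exponentially: there exist an n×n matrix A^∞, a constant M > 0 and λ ∈ (0,1) such that ‖A^t − A^∞‖_∞ ≤ M λ^t for all t ≥ 0, where ‖·‖_∞ denotes the maximum absolute entry of a matrix. -/
open Finset Filter Topology Matrix

/-!
View `A` as a complex matrix `Ã`. Its powers are bounded (`‖Ã‖ ≤ 1` in the `L^∞` operator
norm), and by Gershgorin every eigenvalue lies in a disc `‖μ - A k k‖ ≤ 1 - A k k` with
`A k k > 0`; such a disc lies in the closed unit disc and touches the unit circle only at `1`.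
Write the characteristic polynomial as `(X - 1)^m q` with `q(1) ≠ 0`. Bounded powers force
`(Ã - 1) q(Ã) = 0`, since otherwise `Ã^t` would grow linearly along a Jordan chain. Hence
`E = q(1)⁻¹ q(Ã)` is an idempotent commuting with `Ã` and fixed by it, and `Ã (1 - E)` is
annihilated by `q X`, whose roots lie in the open unit disc. Gelfand's formula bounds the powers
of `Ã (1 - E)` by `C r^t` with `r < 1`, and `Ã^t - E = (Ã (1 - E))^t (1 - E)`; the limit `A^∞`
is the real part of `E`.
-/

open Polynomial

section PolynomialAeval

variable {K R : Type*} [CommRing K] [Ring R] [Algebra K R]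

theorem aeval_mul_eq_eval_one_smul {M N : R} (h : M * N = N) (r : K[X]) :
    aeval M r * N = r.eval 1 • N := by
  obtain ⟨s, hs⟩ := X_sub_C_dvd_sub_C_eval (p := r) (a := (1 : K))
  have hfix : (M - 1) * N = 0 := by rw [sub_mul, h, one_mul, sub_self]
  have hzero : aeval M (r - C (r.eval 1)) * N = 0 := by
    rw [hs, mul_comm, map_mul, mul_assoc]
    simp [hfix]
  rwa [map_sub, aeval_C, sub_mul, sub_eq_zero, Algebra.algebraMap_eq_smul_one, smul_mul_assoc,
    one_mul] at hzero

theorem Polynomial.commute_aeval (M : R) (r : K[X]) : Commute M (aeval M r) := by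
  simpa using (Commute.all X r).map (aeval M)

theorem aeval_mul_mul_eq_of_isIdempotentElem {M P : R} (hMP : Commute M P)
    (hP : IsIdempotentElem P) (r : K[X]) : aeval (M * P) r * P = aeval M r * P := by
  simp only [aeval_eq_sum_range, Finset.sum_mul, smul_mul_assoc, hMP.mul_pow, mul_assoc,
    ← pow_succ, hP.pow_succ_eq]

end PolynomialAeval

section FixedProjection

variable {K R : Type*} [Field K] [Ring R] [Algebra K R]

/-- When `M q(M) = q(M)` and `q(1) ≠ 0`, this is the projection onto the fixed vectors of `M`
along the kernel of `q(M)`. -/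
noncomputable def fixedProj (M : R) (q : K[X]) : R := (q.eval 1)⁻¹ • aeval M q

variable {M : R} {q : K[X]}

theorem commute_fixedProj : Commute M (fixedProj M q) :=
  (commute_aeval M q).smul_right _

variable (hq : M * aeval M q = aeval M q)
include hq

theorem mul_fixedProj : M * fixedProj M q = fixedProj M q := by
  rw [fixedProj, mul_smul_comm, hq]

theorem pow_mul_fixedProj (t : ℕ) : M ^ t * fixedProj M q = fixedProj M q := by
  simpa using aeval_mul_eq_eval_one_smul (mul_fixedProj hq) (X ^ t : K[X])

theorem isIdempotentElem_fixedProj : IsIdempotentElem (fixedProj M q) := by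
  rw [IsIdempotentElem, fixedProj, smul_mul_smul, aeval_mul_eq_eval_one_smul hq, smul_smul]
  congr 1
  grind

theorem aeval_mul_one_sub_fixedProj (h1 : q.eval 1 ≠ 0) :
    aeval M q * (1 - fixedProj M q) = 0 := by
  rw [mul_sub, mul_one, fixedProj, mul_smul_comm, aeval_mul_eq_eval_one_smul hq,
    inv_smul_smul₀ h1, sub_self]

theorem aeval_mul_one_sub_fixedProj_mul_X (h1 : q.eval 1 ≠ 0) :
    aeval (M * (1 - fixedProj M q)) (q * X) = 0 := by
  set P := 1 - fixedProj M q
  have hMP : Commute M P := (Commute.one_right M).sub_right commute_fixedProj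
  calc aeval (M * P) (q * X) = aeval (M * P) q * P * M := by
        rw [map_mul, aeval_X, mul_assoc, hMP.eq]
    _ = 0 := by
        rw [aeval_mul_mul_eq_of_isIdempotentElem hMP (isIdempotentElem_fixedProj hq).one_sub,
          aeval_mul_one_sub_fixedProj hq h1, zero_mul]

theorem pow_sub_fixedProj (t : ℕ) :
    M ^ t - fixedProj M q = (M * (1 - fixedProj M q)) ^ t * (1 - fixedProj M q) := by
  have hMP : Commute M (1 - fixedProj M q) := (Commute.one_right M).sub_right commute_fixedProj
  simpa [mul_sub, pow_mul_fixedProj hq] using (aeval_mul_mul_eq_of_isIdempotentElem hMP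
    (isIdempotentElem_fixedProj hq).one_sub (X ^ t : K[X])).symm

end FixedProjection

section BanachAlgebra

open scoped NNReal ENNReal Asymptotics

variable {R : Type*} [NormedRing R] [NormedAlgebra ℂ R]

theorem sub_one_mul_eq_zero_of_norm_pow_le_of_sq {M N : R} {C : ℝ}
    (hC : ∀ t : ℕ, ‖M ^ t‖ ≤ C) (h : (M - 1) ^ 2 * N = 0) : (M - 1) * N = 0 := by
  set D := (M - 1) * N
  have hMD : M * D = D := by rwa [sq, mul_assoc, sub_mul, one_mul, sub_eq_zero] at h
  have hMN : M * N = N + D := by simp [D, sub_mul]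
  have hpow (t : ℕ) : M ^ t * N = N + (t : ℂ) • D := by
    induction t with
    | zero => simp
    | succ t ih =>
      rw [pow_succ', mul_assoc, ih, mul_add, mul_smul_comm, hMD, hMN]
      push_cast
      module
  have hbound (t : ℕ) : t * ‖D‖ ≤ (C + 1) * ‖N‖ :=
    calc t * ‖D‖ = ‖M ^ t * N - N‖ := by
          rw [hpow, add_sub_cancel_left, norm_smul, Complex.norm_natCast]
      _ ≤ ‖M ^ t‖ * ‖N‖ + ‖N‖ :=
          (norm_sub_le _ _).trans (by gcongr; exact norm_mul_le _ _)
      _ ≤ (C + 1) * ‖N‖ := by nlinarith [hC t, norm_nonneg N]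
  by_contra hD
  obtain ⟨t, ht⟩ := exists_nat_gt ((C + 1) * ‖N‖ / ‖D‖)
  rw [div_lt_iff₀ (norm_pos_iff.mpr hD)] at ht
  linarith [hbound t]

theorem sub_one_mul_eq_zero_of_norm_pow_le {M N : R} {C : ℝ} (hC : ∀ t : ℕ, ‖M ^ t‖ ≤ C)
    {k : ℕ} (h : (M - 1) ^ (k + 1) * N = 0) : (M - 1) * N = 0 := by
  induction k with
  | zero => simpa using h
  | succ k ih =>
    rw [show k + 1 + 1 = 2 + k by omega, pow_add, mul_assoc] at h
    exact ih (by rw [pow_succ', mul_assoc]; exact sub_one_mul_eq_zero_of_norm_pow_le_of_sq hC h)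

theorem spectralRadius_lt_one_of_aeval_eq_zero {a : R} {p : ℂ[X]} (hp0 : p ≠ 0)
    (hp : aeval a p = 0) (hroots : ∀ μ, p.IsRoot μ → ‖μ‖ < 1) :
    spectralRadius ℂ a < 1 := by
  nontriviality R
  have hspec (k : ℂ) (hk : k ∈ spectrum ℂ a) : k ∈ p.roots.toFinset := by
    have := spectrum.subset_polynomial_aeval a p ⟨k, hk, rfl⟩
    rw [hp, spectrum.zero_eq, Set.mem_singleton_iff] at this
    exact Multiset.mem_toFinset.mpr ((mem_roots hp0).mpr this)
  have hsup : p.roots.toFinset.sup (fun μ => ‖μ‖₊) < 1 :=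
    (Finset.sup_lt_iff zero_lt_one).mpr fun μ hμ =>
      hroots μ (isRoot_of_mem_roots (Multiset.mem_toFinset.mp hμ))
  calc spectralRadius ℂ a ≤ (p.roots.toFinset.sup (fun μ => ‖μ‖₊) : ℝ≥0) :=
        iSup₂_le fun k hk =>
          ENNReal.coe_le_coe.mpr (Finset.le_sup (f := (‖·‖₊)) (hspec k hk))
    _ < 1 := by exact_mod_cast hsup

variable [CompleteSpace R]

theorem exists_norm_pow_le_of_spectralRadius_lt_one {a : R} (ha : spectralRadius ℂ a < 1) :
    ∃ C r : ℝ, 0 < r ∧ r < 1 ∧ ∀ t : ℕ, ‖a ^ t‖ ≤ C * r ^ t := by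
  obtain ⟨r, hr, hr1⟩ := ENNReal.lt_iff_exists_nnreal_btwn.mp ha
  have hr0 : (0 : ℝ) < r := by exact_mod_cast zero_le.trans_lt hr
  have hev : ∀ᶠ t in atTop, ‖a ^ t‖ ≤ (r : ℝ) ^ t := by
    have hgelfand := spectrum.pow_norm_pow_one_div_tendsto_nhds_spectralRadius a
    filter_upwards [hgelfand.eventually_lt_const hr, eventually_gt_atTop 0] with t ht ht0
    rw [← ENNReal.ofReal_coe_nnreal, ENNReal.ofReal_lt_ofReal_iff hr0, one_div] at ht
    have := (Real.rpow_inv_lt_iff_of_pos (norm_nonneg _) r.2 (by positivity)).mp ht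
    exact_mod_cast this.le
  have hO : (fun t : ℕ => a ^ t) =O[atTop] fun t => (r : ℝ) ^ t :=
    Asymptotics.IsBigO.of_bound 1 <| hev.mono fun t ht => by
      rwa [one_mul, Real.norm_of_nonneg (by positivity)]
  obtain ⟨C, hC⟩ :=
    (Asymptotics.isBigO_nat_atTop_iff fun t ht => absurd ht (pow_ne_zero t hr0.ne')).mp hO
  exact ⟨C, r, hr0, by exact_mod_cast hr1, fun t => by simpa using hC t⟩

theorem exists_norm_pow_sub_le_of_aeval_eq_zero {M : R} {C : ℝ}
    (hC : ∀ t : ℕ, ‖M ^ t‖ ≤ C) {p : ℂ[X]} (hp0 : p ≠ 0) (hp : aeval M p = 0)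
    (hroots : ∀ μ, p.IsRoot μ → μ = 1 ∨ ‖μ‖ < 1) :
    ∃ (E : R) (c r : ℝ), 0 < r ∧ r < 1 ∧ ∀ t : ℕ, ‖M ^ t - E‖ ≤ c * r ^ t := by
  obtain ⟨q, hpq, hndvd⟩ := p.exists_eq_pow_rootMultiplicity_mul_and_not_dvd hp0 1
  have hq0 : q ≠ 0 := by rintro rfl; exact hp0 (by rw [hpq, mul_zero])
  have hq1 : q.eval 1 ≠ 0 := fun h => hndvd (dvd_iff_isRoot.mpr h)
  have hfix : M * aeval M q = aeval M q := by
    rw [hpq, map_mul, map_pow] at hp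
    have h := sub_one_mul_eq_zero_of_norm_pow_le hC (N := aeval M q) <| by
      simpa [pow_succ', mul_assoc] using congrArg ((M - 1) * ·) hp
    rwa [sub_mul, one_mul, sub_eq_zero] at h
  have hroots_qX (μ : ℂ) (hμ : (q * X).IsRoot μ) : ‖μ‖ < 1 := by
    rcases root_mul.mp hμ with hqμ | hXμ
    · have hpμ : p.IsRoot μ := by rw [hpq, IsRoot, eval_mul, hqμ.eq_zero, mul_zero]
      exact (hroots μ hpμ).resolve_left fun h => hq1 (h ▸ hqμ.eq_zero)
    · rw [IsRoot, eval_X] at hXμ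
      simp [hXμ]
  obtain ⟨c, r, hr0, hr1, hc⟩ := exists_norm_pow_le_of_spectralRadius_lt_one
    (spectralRadius_lt_one_of_aeval_eq_zero (mul_ne_zero hq0 X_ne_zero)
      (aeval_mul_one_sub_fixedProj_mul_X hfix hq1) hroots_qX)
  refine ⟨fixedProj M q, c * ‖1 - fixedProj M q‖, r, hr0, hr1, fun t => ?_⟩
  calc ‖M ^ t - fixedProj M q‖
      = ‖(M * (1 - fixedProj M q)) ^ t * (1 - fixedProj M q)‖ := by rw [pow_sub_fixedProj hfix]
    _ ≤ c * r ^ t * ‖1 - fixedProj M q‖ := (norm_mul_le _ _).trans (by gcongr; exact hc t)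
    _ = c * ‖1 - fixedProj M q‖ * r ^ t := by ring

end BanachAlgebra

theorem Complex.eq_one_or_norm_lt_one_of_norm_sub_le {c : ℝ} (hc : 0 < c) {μ : ℂ}
    (h : ‖μ - c‖ ≤ 1 - c) : μ = 1 ∨ ‖μ‖ < 1 := by
  rw [or_iff_not_imp_right, not_lt]
  intro h1
  have hsq (z : ℂ) : ‖z‖ ^ 2 = z.re ^ 2 + z.im ^ 2 := by
    rw [Complex.sq_norm, Complex.normSq_apply]; ring
  have hdisc : (μ.re - c) ^ 2 + μ.im ^ 2 ≤ (1 - c) ^ 2 := by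
    have := pow_le_pow_left₀ (norm_nonneg _) h 2
    rwa [hsq, Complex.sub_re, Complex.sub_im, Complex.ofReal_re, Complex.ofReal_im, sub_zero]
      at this
  have hcircle : 1 ≤ μ.re ^ 2 + μ.im ^ 2 := by
    rw [← hsq]; nlinarith [norm_nonneg μ]
  have hc1 : c ≤ 1 := by linarith [norm_nonneg (μ - c)]
  have hre : 1 ≤ μ.re := by nlinarith
  have hre1 : μ.re = 1 := by nlinarith [mul_nonneg (sub_nonneg.2 hre) (sub_nonneg.2 hc1)]
  have him : μ.im = 0 := by nlinarith
  exact Complex.ext (by rw [hre1, Complex.one_re]) (by rw [him, Complex.one_im])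

open scoped Matrix.Norms.Operator

theorem Matrix.norm_entry_le_linfty_opNorm {m n α : Type*} [Fintype m] [Fintype n]
    [SeminormedAddCommGroup α] (X : Matrix m n α) (i : m) (j : n) : ‖X i j‖ ≤ ‖X‖ := by
  rw [linfty_opNorm_def, ← coe_nnnorm, NNReal.coe_le_coe]
  exact (single_le_sum (f := fun k => ‖X i k‖₊) (fun _ _ => zero_le) (mem_univ j)).trans
    (le_sup (f := fun i => ∑ k, ‖X i k‖₊) (mem_univ i))

section Stochastic

variable {n : ℕ} {A B : Matrix (Fin n) (Fin n) ℝ}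

theorem isStochastic_one : IsStochastic (1 : Matrix (Fin n) (Fin n) ℝ) :=
  ⟨fun i j => by by_cases h : i = j <;> simp [one_apply, h], fun i => by simp [one_apply]⟩

theorem IsStochastic.mul (hA : IsStochastic A) (hB : IsStochastic B) : IsStochastic (A * B) := by
  refine ⟨fun i j => ?_, fun i => ?_⟩
  · rw [mul_apply]
    exact sum_nonneg fun k _ => mul_nonneg (hA.1 i k) (hB.1 k j)
  · simp_rw [mul_apply]
    rw [sum_comm]
    simp_rw [← mul_sum, hB.2, mul_one, hA.2]

theorem IsStochastic.pow (hA : IsStochastic A) (t : ℕ) : IsStochastic (A ^ t) := by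
  induction t with
  | zero => exact isStochastic_one
  | succ t ih => exact pow_succ A t ▸ ih.mul hA

theorem IsStochastic.norm_map_ofReal_le_one (hA : IsStochastic A) :
    ‖A.map Complex.ofRealHom‖ ≤ 1 := by
  rw [linfty_opNorm_def, NNReal.coe_le_one]
  refine Finset.sup_le fun i _ => ?_
  rw [← NNReal.coe_le_coe]
  push_cast
  simp [Complex.norm_real, abs_of_nonneg (hA.1 i _), hA.2 i]

theorem IsStochastic.eq_one_or_norm_lt_one (hA : IsStochastic A) (hdiag : ∀ i, 0 < A i i)
    {μ : ℂ} (hμ : (A.map Complex.ofRealHom).charpoly.IsRoot μ) : μ = 1 ∨ ‖μ‖ < 1 := by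
  have hev : Module.End.HasEigenvalue (toLin' (A.map Complex.ofRealHom)) μ := by
    rw [Module.End.hasEigenvalue_iff_mem_spectrum, spectrum_toLin',
      mem_spectrum_iff_isRoot_charpoly]
    exact hμ
  obtain ⟨k, hk⟩ := eigenvalue_mem_ball hev
  have hrad : ∑ j ∈ univ.erase k, ‖A.map Complex.ofRealHom k j‖ = 1 - A k k := by
    simp [Complex.norm_real, abs_of_nonneg (hA.1 k _), sum_erase_eq_sub, hA.2 k]
  rw [Metric.mem_closedBall, dist_eq_norm, hrad] at hk
  exact Complex.eq_one_or_norm_lt_one_of_norm_sub_le (hdiag k) (by simpa using hk)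

end Stochastic

theorem stmt1 {n : ℕ} (A : Matrix (Fin n) (Fin n) ℝ)
    (hA : IsStochastic A) (hdiag : ∀ i, 0 < A i i) :
    ∃ (Ainf : Matrix (Fin n) (Fin n) ℝ) (M lam : ℝ), 0 < M ∧ 0 < lam ∧ lam < 1 ∧
      ∀ (t : ℕ) (i j : Fin n), |(A ^ t) i j - Ainf i j| ≤ M * lam ^ t := by
  set Ac := A.map Complex.ofRealHom
  have hpow (t : ℕ) : ‖Ac ^ t‖ ≤ 1 := by
    rw [← Matrix.map_pow]
    exact (hA.pow t).norm_map_ofReal_le_one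
  obtain ⟨E, c, r, hr0, hr1, hE⟩ := exists_norm_pow_sub_le_of_aeval_eq_zero hpow
    (charpoly_monic Ac).ne_zero (aeval_self_charpoly Ac) fun _ => hA.eq_one_or_norm_lt_one hdiag
  refine ⟨E.map Complex.re, max c 1, r, by positivity, hr0, hr1, fun t i j => ?_⟩
  calc |(A ^ t) i j - (E i j).re| = |((Ac ^ t - E) i j).re| := by simp [← Matrix.map_pow, Ac]
    _ ≤ ‖(Ac ^ t - E) i j‖ := Complex.abs_re_le_norm _
    _ ≤ ‖Ac ^ t - E‖ := norm_entry_le_linfty_opNorm _ i j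
    _ ≤ c * r ^ t := hE t
    _ ≤ max c 1 * r ^ t := by gcongr; exact le_max_left _ _
end

section
/- Let C = {C_1,…,C_K} be a clustering of {1,…,n} and let A and B be n×n stochastic matrices, each having inter-cluster common influence w.r.t. C. Then Δ_C(AB) ≤ (1 − μ_C(A)) Δ_C(B). -/
open Finset Filter Topology Matrix

theorem stmt3 {n K : ℕ} (C : Fin K → Finset (Fin n)) (hC : IsClustering C)
    (A B : Matrix (Fin n) (Fin n) ℝ)
    (hA : IsStochastic A) (hB : IsStochastic B)
    (hinflA : InterClusterCommonInfluence C A)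
    (hinflB : InterClusterCommonInfluence C B) :
    DeltaC C (A * B) ≤ (1 - muC C A) * DeltaC C B := by
  obtain ⟨hdisj, hcov⟩ := hC
  obtain ⟨hA0, hA1⟩ := hA
  obtain ⟨hB0, hB1⟩ := hB
  rcases Nat.eq_zero_or_pos n with hn | hn
  · subst hn
    have hD : ∀ M : Matrix (Fin 0) (Fin 0) ℝ, DeltaC C M = 0 := by
      intro M
      have : {d | ∃ p, ∃ i ∈ C p, ∃ j ∈ C p, ∃ k, d = |M i k - M j k|} = (∅ : Set ℝ) := by
        ext d; simp only [Set.mem_setOf_eq, Set.mem_empty_iff_false, iff_false, not_exists]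
        rintro p i ⟨hi, -⟩; exact i.elim0
      rw [DeltaC, this, Real.sSup_empty]
    have hμ : muC C A = 0 := by
      have : {s | ∃ p, ∃ i ∈ C p, ∃ j ∈ C p, s = ∑ k, min (A i k) (A j k)} = (∅ : Set ℝ) := by
        ext s; simp only [Set.mem_setOf_eq, Set.mem_empty_iff_false, iff_false, not_exists]
        rintro p i ⟨hi, -⟩; exact i.elim0
      rw [muC, this, Real.sInf_empty]
    rw [hD, hD, hμ]; norm_num
  · -- main case
    have hpart : ∀ f : Fin n → ℝ, ∑ l, f l = ∑ q, ∑ l ∈ C q, f l := by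
      intro f
      rw [← Finset.sum_biUnion (fun p _ q _ hpq => hdisj p q hpq)]
      congr 1
      ext i
      simp only [Finset.mem_biUnion, Finset.mem_univ, true_and]
      exact iff_of_true trivial (hcov i)
    have hBle1 : ∀ i j, B i j ≤ 1 := by
      intro i j
      calc B i j ≤ ∑ k, B i k := Finset.single_le_sum (fun k _ => hB0 i k) (mem_univ j)
      _ = 1 := hB1 i
    have hbddB : BddAbove {d | ∃ p, ∃ i ∈ C p, ∃ j ∈ C p, ∃ k, d = |B i k - B j k|} := by
      refine ⟨1, ?_⟩
      rintro d ⟨p, i, hi, j, hj, k, rfl⟩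
      rw [abs_sub_le_iff]
      constructor <;> nlinarith [hB0 i k, hB0 j k, hBle1 i k, hBle1 j k]
    have hΔub : ∀ q, ∀ i ∈ C q, ∀ j ∈ C q, ∀ k, |B i k - B j k| ≤ DeltaC C B :=
      fun q i hi j hj k => le_csSup hbddB ⟨q, i, hi, j, hj, k, rfl⟩
    have hbddμ : BddBelow {s | ∃ p, ∃ i ∈ C p, ∃ j ∈ C p, s = ∑ k, min (A i k) (A j k)} := by
      refine ⟨0, ?_⟩
      rintro s ⟨p, i, hi, j, hj, rfl⟩
      exact Finset.sum_nonneg fun k _ => le_min (hA0 i k) (hA0 j k)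
    set Δ := DeltaC C B with hΔdef
    set μ := muC C A with hμdef
    obtain ⟨p0, hp0⟩ := hcov ⟨0, hn⟩
    have hΔ0 : 0 ≤ Δ := by simpa using hΔub p0 ⟨0, hn⟩ hp0 ⟨0, hn⟩ hp0 ⟨0, hn⟩
    have hμ1 : μ ≤ 1 := csInf_le hbddμ ⟨p0, ⟨0, hn⟩, hp0, ⟨0, hn⟩, hp0, by
      simp [min_self, hA1]⟩
    apply Real.sSup_le
    · rintro d ⟨p, i, hi, j, hj, k, rfl⟩
      set μij := ∑ l, min (A i l) (A j l) with hμijdef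
      have hμle : μ ≤ μij := csInf_le hbddμ ⟨p, i, hi, j, hj, rfl⟩
      set dp := fun l => A i l - min (A i l) (A j l) with hdpdef
      set dm := fun l => A j l - min (A i l) (A j l) with hdmdef
      have hdp0 : ∀ l, 0 ≤ dp l := fun l => sub_nonneg.2 (min_le_left _ _)
      have hdm0 : ∀ l, 0 ≤ dm l := fun l => sub_nonneg.2 (min_le_right _ _)
      have hdd : ∀ l, dp l - dm l = A i l - A j l := fun l => by
        simp only [hdpdef, hdmdef]; ring
      have hsumdp : ∑ l, dp l = 1 - μij := by
        simp only [hdpdef, Finset.sum_sub_distrib, hA1 i, hμijdef]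
      -- per cluster equality of masses
      have hsq_eq : ∀ q, ∑ l ∈ C q, dp l = ∑ l ∈ C q, dm l := by
        intro q
        simp only [hdpdef, hdmdef, Finset.sum_sub_distrib]
        rw [hinflA p q i hi j hj]
      have hsq0 : ∀ q, 0 ≤ ∑ l ∈ C q, dp l :=
        fun q => Finset.sum_nonneg fun l _ => hdp0 l
      -- per-cluster bound
      have hclaim : ∀ q, |∑ l ∈ C q, (A i l - A j l) * B l k| ≤ (∑ l ∈ C q, dp l) * Δ := by
        intro q
        by_cases hq : (C q).Nonempty
        · obtain ⟨lM, hlM, hM⟩ := Finset.exists_max_image (C q) (fun l => B l k) hq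
          obtain ⟨lm, hlm, hm⟩ := Finset.exists_min_image (C q) (fun l => B l k) hq
          have hBd : |B lM k - B lm k| ≤ Δ := hΔub q lM hlM lm hlm k
          rw [abs_le] at hBd ⊢
          have hsplit : ∑ l ∈ C q, (A i l - A j l) * B l k
              = ∑ l ∈ C q, dp l * B l k - ∑ l ∈ C q, dm l * B l k := by
            rw [← Finset.sum_sub_distrib]
            exact Finset.sum_congr rfl fun l _ => by rw [← hdd l]; ring
          have hup1 : ∑ l ∈ C q, dp l * B l k ≤ (∑ l ∈ C q, dp l) * B lM k := by
            rw [Finset.sum_mul]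
            exact Finset.sum_le_sum fun l hl =>
              mul_le_mul_of_nonneg_left (hM l hl) (hdp0 l)
          have hlo1 : (∑ l ∈ C q, dm l) * B lm k ≤ ∑ l ∈ C q, dm l * B l k := by
            rw [Finset.sum_mul]
            exact Finset.sum_le_sum fun l hl =>
              mul_le_mul_of_nonneg_left (hm l hl) (hdm0 l)
          have hlo1b : (∑ l ∈ C q, dp l) * B lm k ≤ ∑ l ∈ C q, dp l * B l k := by
            rw [Finset.sum_mul]
            exact Finset.sum_le_sum fun l hl =>
              mul_le_mul_of_nonneg_left (hm l hl) (hdp0 l)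
          have hup1b : ∑ l ∈ C q, dm l * B l k ≤ (∑ l ∈ C q, dm l) * B lM k := by
            rw [Finset.sum_mul]
            exact Finset.sum_le_sum fun l hl =>
              mul_le_mul_of_nonneg_left (hM l hl) (hdm0 l)
          rw [← hsq_eq q] at hlo1 hup1b
          have key : (∑ l ∈ C q, dp l) * (B lM k - B lm k) ≤ (∑ l ∈ C q, dp l) * Δ :=
            mul_le_mul_of_nonneg_left hBd.2 (hsq0 q)
          have hexp : (∑ l ∈ C q, dp l) * (B lM k - B lm k)
              = (∑ l ∈ C q, dp l) * B lM k - (∑ l ∈ C q, dp l) * B lm k :=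
            mul_sub _ _ _
          constructor
          · rw [hsplit]; linarith
          · rw [hsplit]; linarith
        · rw [Finset.not_nonempty_iff_eq_empty.1 hq]
          simp [hΔ0]
      -- assemble
      have hABdiff : (A * B) i k - (A * B) j k = ∑ l, (A i l - A j l) * B l k := by
        simp [Matrix.mul_apply, ← Finset.sum_sub_distrib, sub_mul]
      calc |(A * B) i k - (A * B) j k|
          = |∑ q, ∑ l ∈ C q, (A i l - A j l) * B l k| := by
            rw [hABdiff, hpart (fun l => (A i l - A j l) * B l k)]
        _ ≤ ∑ q, |∑ l ∈ C q, (A i l - A j l) * B l k| := Finset.abs_sum_le_sum_abs _ _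
        _ ≤ ∑ q, (∑ l ∈ C q, dp l) * Δ := Finset.sum_le_sum fun q _ => hclaim q
        _ = (∑ q, ∑ l ∈ C q, dp l) * Δ := by rw [Finset.sum_mul]
        _ = (1 - μij) * Δ := by rw [← hpart dp, hsumdp]
        _ ≤ (1 - μ) * Δ := mul_le_mul_of_nonneg_right (by linarith) hΔ0
    · exact mul_nonneg (by linarith) hΔ0
end

section
/- Let C = {C_1,…,C_K} be a clustering of {1,…,n}. If A and B are n×n stochastic matrices each having inter-cluster common influence w.r.t. C, then the product AB is a stochastic matrix having inter-cluster common influence w.r.t. C. -/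
open Finset Filter Topology Matrix

theorem stmt4 {n K : ℕ} (C : Fin K → Finset (Fin n)) (hC : IsClustering C)
    (A B : Matrix (Fin n) (Fin n) ℝ)
    (hA : IsStochastic A) (hB : IsStochastic B)
    (hinflA : InterClusterCommonInfluence C A)
    (hinflB : InterClusterCommonInfluence C B) :
    IsStochastic (A * B) ∧ InterClusterCommonInfluence C (A * B) := by
  classical
  obtain ⟨hAn, hAs⟩ := hA
  obtain ⟨hBn, hBs⟩ := hB
  constructor
  · constructor
    · intro i j
      rw [Matrix.mul_apply]
      exact Finset.sum_nonneg fun k _ => mul_nonneg (hAn i k) (hBn k j)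
    · intro i
      simp only [Matrix.mul_apply]
      rw [Finset.sum_comm]
      simp_rw [← Finset.mul_sum, hBs, mul_one]
      exact hAs i
  · intro p q i hi i' hi'
    have key : ∀ i : Fin n, ∑ j ∈ C q, (A * B) i j
        = ∑ k, A i k * (∑ j ∈ C q, B k j) := by
      intro i
      simp only [Matrix.mul_apply]
      rw [Finset.sum_comm]
      simp_rw [Finset.mul_sum]
    rw [key i, key i']
    set cl : Fin n → Fin K := fun k => (hC.2 k).choose with hcl_def
    have hcl : ∀ k, k ∈ C (cl k) := fun k => (hC.2 k).choose_spec
    have hmem : ∀ r k, k ∈ C r ↔ cl k = r := by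
      intro r k
      constructor
      · intro hk
        by_contra h
        exact Finset.disjoint_left.mp (hC.1 (cl k) r h) (hcl k) hk
      · rintro rfl; exact hcl k
    have fib : ∀ f : Fin n → ℝ, ∑ k, f k = ∑ r, ∑ k ∈ C r, f k := by
      intro f
      rw [← Finset.sum_fiberwise_of_maps_to (g := cl) (t := Finset.univ)
        (fun x _ => Finset.mem_univ _) f]
      refine Finset.sum_congr rfl fun r _ => Finset.sum_congr ?_ fun _ _ => rfl
      ext k
      simp [hmem r k]
    rw [fib, fib]
    refine Finset.sum_congr rfl fun r _ => ?_
    rcases (C r).eq_empty_or_nonempty with h | ⟨k0, hk0⟩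
    · simp [h]
    · have hs : ∀ k ∈ C r, (∑ j ∈ C q, B k j) = ∑ j ∈ C q, B k0 j :=
        fun k hk => hinflB r q k hk k0 hk0
      calc ∑ k ∈ C r, A i k * (∑ j ∈ C q, B k j)
          = ∑ k ∈ C r, A i k * (∑ j ∈ C q, B k0 j) :=
            Finset.sum_congr rfl fun k hk => by rw [hs k hk]
        _ = (∑ k ∈ C r, A i k) * (∑ j ∈ C q, B k0 j) := by rw [Finset.sum_mul]
        _ = (∑ k ∈ C r, A i' k) * (∑ j ∈ C q, B k0 j) := by
            rw [hinflA p r i hi i' hi']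
        _ = ∑ k ∈ C r, A i' k * (∑ j ∈ C q, B k0 j) := by rw [Finset.sum_mul]
        _ = ∑ k ∈ C r, A i' k * (∑ j ∈ C q, B k j) :=
            Finset.sum_congr rfl fun k hk => by rw [hs k hk]
end

section
/- Let C = {C_1,…,C_K} be a clustering of {1,…,n} and let A be an n×n stochastic matrix that has inter-cluster common influence w.r.t. C, has cluster-spanning-trees w.r.t. C, and has all diagonal entries positive. Let T ≥ 1, let u : ℕ → ℝ be T-periodic (u(t+T) = u(t) for all t) with Σ_{k=0}^{T−1} u(k) = 0, let α_1,…,α_K ∈ ℝ, and define the input I(t) ∈ ℝ^n by I_i(t) = α_p u(t) for i ∈ C_p. Then for every initial condition x(0) ∈ ℝ^n, the solution of x(t+1) = A x(t) + I(t) converges to a T-periodic, intra-cluster identical trajectory: there exist scalar functions v_1,…,v_K : ℕ → ℝ with v_p(t+T) = v_p(t) for all t, such that |x_j(t) − v_p(t)| → 0 as t → ∞ for every j ∈ C_p and every p = 1,…,K. -/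
/-!
Inside a cluster, common influence makes `A` map cluster-constant vectors to cluster-constant
vectors, so neither the input nor the inter-cluster dynamics affect intra-cluster differences.
The spanning trees and the positive diagonal make some power `A ^ L` scramble every cluster
(two rows of a cluster share a positive column), so by Hajnal's inequality the intra-cluster
oscillation of `x t` decays geometrically.

A stochastic matrix with positive diagonal is aperiodic: mass leaves the transient states
geometrically and `A ^ L` scrambles each essential class, so `A ^ t` converges geometrically to
some `P` with `P A = P`. As the input is `T`-periodic, `x t - x (t + T) = A ^ t (x 0 - x T)`,
and `P (x 0 - x T) = 0` because the input has zero mean over a period. Hence `x (t + T) - x t`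
decays geometrically and `x` approaches the `T`-periodic limit `v t = lim_m x (t + m T)`.
-/

open Finset Filter Topology Matrix

section Stochastic

variable {n : ℕ} {M N : Matrix (Fin n) (Fin n) ℝ}

theorem isStochastic_iff_mem_rowStochastic :
    IsStochastic M ↔ M ∈ rowStochastic ℝ (Fin n) :=
  mem_rowStochastic_iff_sum.symm

theorem IsStochastic.mul_s8 (hM : IsStochastic M) (hN : IsStochastic N) : IsStochastic (M * N) :=
  isStochastic_iff_mem_rowStochastic.2 <| mul_mem
    (isStochastic_iff_mem_rowStochastic.1 hM) (isStochastic_iff_mem_rowStochastic.1 hN)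

theorem IsStochastic.pow_s8 (hM : IsStochastic M) (m : ℕ) : IsStochastic (M ^ m) :=
  isStochastic_iff_mem_rowStochastic.2 <|
    pow_mem (isStochastic_iff_mem_rowStochastic.1 hM) m

theorem IsStochastic.le_one (hM : IsStochastic M) (i j : Fin n) : M i j ≤ 1 :=
  le_one_of_mem_rowStochastic (isStochastic_iff_mem_rowStochastic.1 hM)

theorem IsStochastic.sum_le_one (hM : IsStochastic M) (i : Fin n) (s : Finset (Fin n)) :
    ∑ k ∈ s, M i k ≤ 1 :=
  hM.2 i ▸ Finset.sum_le_sum_of_subset_of_nonneg (subset_univ s) fun k _ _ => hM.1 i k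

theorem reaches_of_pos {i j : Fin n} (h : 0 < M i j) : Reaches M j i :=
  Relation.ReflTransGen.single h

theorem Reaches.exists_pow_pos (hM : IsStochastic M) {v i : Fin n} (h : Reaches M v i) :
    ∃ m, 0 < (M ^ m) i v := by
  induction h with
  | refl => exact ⟨0, by simp⟩
  | @tail b c _ hcb ih =>
    obtain ⟨m, hm⟩ := ih
    refine ⟨m + 1, ?_⟩
    rw [pow_succ', Matrix.mul_apply]
    exact (mul_pos hcb hm).trans_le <| Finset.single_le_sum
      (fun k _ => mul_nonneg (hM.1 c k) ((hM.pow_s8 m).1 k v)) (mem_univ b)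

theorem pow_pos_of_le (hM : IsStochastic M) (hdiag : ∀ i, 0 < M i i) {i j : Fin n} {m m' : ℕ}
    (hmm' : m ≤ m') (h : 0 < (M ^ m) i j) : 0 < (M ^ m') i j := by
  induction m', hmm' using Nat.le_induction with
  | base => exact h
  | succ m' _ ih =>
    rw [pow_succ', Matrix.mul_apply]
    exact (mul_pos (hdiag i) ih).trans_le <| Finset.single_le_sum
      (fun k _ => mul_nonneg (hM.1 i k) ((hM.pow_s8 m').1 k j)) (mem_univ i)

/-- Positive diagonal entries make positivity of `(M ^ m) i v` persist as `m` grows, so a single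
`L` serves all reachable pairs. -/
theorem exists_pow_ge_of_reaches (hM : IsStochastic M) (hdiag : ∀ i, 0 < M i i) :
    ∃ L, 0 < L ∧ ∃ ε : ℝ, 0 < ε ∧ ε ≤ 1 ∧ ∀ i v, Reaches M v i → ε ≤ (M ^ L) i v := by
  classical
  have hm : ∀ q : Fin n × Fin n, ∃ m, Reaches M q.2 q.1 → 0 < (M ^ m) q.1 q.2 := fun q => by
    by_cases h : Reaches M q.2 q.1
    · obtain ⟨m, hm⟩ := h.exists_pow_pos hM
      exact ⟨m, fun _ => hm⟩
    · exact ⟨0, fun h' => absurd h' h⟩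
  choose m hm using hm
  set L := univ.sup m + 1
  have hpos : ∀ i v, Reaches M v i → 0 < (M ^ L) i v := fun i v h =>
    pow_pos_of_le hM hdiag (Nat.le_succ_of_le (le_sup (f := m) (mem_univ (i, v)))) (hm _ h)
  set S := insert 1 ((univ.filter fun q : Fin n × Fin n => Reaches M q.2 q.1).image
    fun q => (M ^ L) q.1 q.2)
  refine ⟨L, Nat.succ_pos _, S.min' (insert_nonempty _ _), ?_, S.min'_le _ (mem_insert_self _ _),
    fun i v h => S.min'_le _ <| mem_insert_of_mem <| mem_image_of_mem _ <|
      mem_filter.2 ⟨mem_univ (i, v), h⟩⟩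
  rw [Finset.lt_min'_iff]
  intro a ha
  rcases mem_insert.1 ha with rfl | ha
  · exact one_pos
  · obtain ⟨q, hq, rfl⟩ := mem_image.1 ha
    exact hpos _ _ (mem_filter.1 hq).2

end Stochastic

section Absorbing

variable {n : ℕ} {M N : Matrix (Fin n) (Fin n) ℝ} {S : Finset (Fin n)}

def IsAbsorbing (M : Matrix (Fin n) (Fin n) ℝ) (S : Finset (Fin n)) : Prop :=
  ∀ l ∈ S, ∀ k ∉ S, M l k = 0

theorem isAbsorbing_of_pos (hM : IsStochastic M) (h : ∀ l ∈ S, ∀ k, 0 < M l k → k ∈ S) :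
    IsAbsorbing M S := fun l hl k hk =>
  (hM.1 l k).eq_or_lt.elim Eq.symm fun hpos => absurd (h l hl k hpos) hk

theorem IsAbsorbing.mul_s8 (hM : IsAbsorbing M S) (hN : IsAbsorbing N S) : IsAbsorbing (M * N) S :=
  fun l hl k hk => Matrix.mul_apply (M := M) ▸ Finset.sum_eq_zero fun m _ => by
    by_cases hm : m ∈ S
    · rw [hN m hm k hk, mul_zero]
    · rw [hM l hl m hm, zero_mul]

theorem IsAbsorbing.pow_s8 (hM : IsAbsorbing M S) : ∀ m, IsAbsorbing (M ^ m) S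
  | 0 => fun l hl k hk => by rw [pow_zero, Matrix.one_apply_ne (ne_of_mem_of_not_mem hl hk)]
  | m + 1 => by rw [pow_succ]; exact (hM.pow_s8 m).mul_s8 hM

theorem IsAbsorbing.sum_eq_one (hM : IsStochastic M) (hS : IsAbsorbing M S) {l : Fin n}
    (hl : l ∈ S) : ∑ k ∈ S, M l k = 1 :=
  hM.2 l ▸ Finset.sum_subset (subset_univ S) fun k _ hk => hS l hl k hk

theorem IsAbsorbing.sum_compl_mul_le (hM : IsStochastic M) (hN : IsAbsorbing N S) {δ : ℝ}
    (hδ : ∀ l, ∑ k ∈ Sᶜ, N l k ≤ δ) (x : Fin n) :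
    ∑ k ∈ Sᶜ, (M * N) x k ≤ (∑ k ∈ Sᶜ, M x k) * δ := by
  have hexp : ∑ k ∈ Sᶜ, (M * N) x k = ∑ l, M x l * ∑ k ∈ Sᶜ, N l k := by
    simp only [Matrix.mul_apply, Finset.mul_sum]
    exact Finset.sum_comm
  have hin : ∑ l ∈ S, M x l * ∑ k ∈ Sᶜ, N l k = 0 := Finset.sum_eq_zero fun l hl =>
    by rw [Finset.sum_eq_zero fun k hk => hN l hl k (mem_compl.1 hk), mul_zero]
  rw [hexp, ← Finset.sum_add_sum_compl S, hin, zero_add, Finset.sum_mul]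
  exact Finset.sum_le_sum fun l _ => mul_le_mul_of_nonneg_left (hδ l) (hM.1 x l)

theorem IsAbsorbing.sum_compl_pow_le (hM : IsStochastic M) (hS : IsAbsorbing M S) {L : ℕ}
    {δ : ℝ} (hδ0 : 0 ≤ δ) (hδ : ∀ l, ∑ k ∈ Sᶜ, (M ^ L) l k ≤ δ) (t : ℕ) (x : Fin n) :
    ∑ k ∈ Sᶜ, (M ^ t) x k ≤ δ ^ (t / L) := by
  have hq : ∀ q, ∑ k ∈ Sᶜ, (M ^ (t % L) * (M ^ L) ^ q) x k ≤ δ ^ q := by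
    intro q
    induction q with
    | zero => simpa using (hM.pow_s8 _).sum_le_one x Sᶜ
    | succ q ih =>
      rw [pow_succ (M ^ L) q, ← mul_assoc, pow_succ δ q]
      exact ((hS.pow_s8 L).sum_compl_mul_le ((hM.pow_s8 _).mul_s8 ((hM.pow_s8 L).pow_s8 q)) hδ x).trans
        (mul_le_mul_of_nonneg_right ih hδ0)
  have := hq (t / L)
  rwa [← pow_mul, ← pow_add, Nat.mod_add_div] at this

end Absorbing

section Essential

variable {n : ℕ} {M : Matrix (Fin n) (Fin n) ℝ}

-- `Reaches M k e`: the chain of `M` started at `e` can visit `k`.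
def IsEssential (M : Matrix (Fin n) (Fin n) ℝ) (e : Fin n) : Prop :=
  ∀ k, Reaches M k e → Reaches M e k

theorem IsEssential.of_reaches {e k : Fin n} (he : IsEssential M e) (h : Reaches M k e) :
    IsEssential M k := fun l hl => h.trans (he l (hl.trans h))

theorem exists_isEssential_reaches (i : Fin n) : ∃ e, IsEssential M e ∧ Reaches M e i := by
  classical
  let below (e : Fin n) : Finset (Fin n) := univ.filter (Reaches M · e)
  obtain ⟨e, he, hmin⟩ := (univ.filter (Reaches M · i)).exists_min_image (fun e => #(below e))
    ⟨i, mem_filter.2 ⟨mem_univ _, .refl⟩⟩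
  refine ⟨e, fun k hk => ?_, (mem_filter.1 he).2⟩
  by_contra hek
  have hlt : #(below k) < #(below e) := Finset.card_lt_card <| Finset.ssubset_iff_subset_ne.2
    ⟨fun l hl => mem_filter.2 ⟨mem_univ _, (mem_filter.1 hl).2.trans hk⟩,
     fun heq => hek (mem_filter.1 (heq ▸ mem_filter.2 ⟨mem_univ e, .refl⟩ : e ∈ below k)).2⟩
  exact hlt.not_ge (hmin k (mem_filter.2 ⟨mem_univ _, hk.trans (mem_filter.1 he).2⟩))

end Essential

/-- Hajnal's inequality. -/
theorem abs_dotProduct_sub_dotProduct_le {κ : Type*} [Fintype κ] {w w' c y : κ → ℝ} {μ D : ℝ}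
    (hw : ∀ k, 0 ≤ w k) (hw' : ∀ k, 0 ≤ w' k) (hw1 : ∑ k, w k = 1) (hw'1 : ∑ k, w' k = 1)
    (hc : w ⬝ᵥ c = w' ⬝ᵥ c) (hD : 0 ≤ D)
    (hy : ∀ k, 0 < w k ∨ 0 < w' k → c k ≤ y k ∧ y k ≤ c k + D)
    (hμ : μ ≤ ∑ k, min (w k) (w' k)) :
    |w ⬝ᵥ y - w' ⬝ᵥ y| ≤ (1 - μ) * D := by
  set v : κ → ℝ := fun k => min (w k) (w' k)
  have hbound : ∀ u : κ → ℝ, (∀ k, v k ≤ u k) → ∑ k, u k = 1 →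
      (∀ k, 0 < u k → c k ≤ y k ∧ y k ≤ c k + D) →
      0 ≤ ∑ k, (u k - v k) * (y k - c k) ∧ ∑ k, (u k - v k) * (y k - c k) ≤ (1 - μ) * D := by
    intro u hvu hu1 hyu
    have hterm : ∀ k, 0 ≤ (u k - v k) * (y k - c k) ∧
        (u k - v k) * (y k - c k) ≤ (u k - v k) * D := fun k => by
      rcases (hvu k).eq_or_lt with h | h
      · simp [h]
      · have hk := hyu k ((le_min (hw k) (hw' k)).trans_lt h)
        exact ⟨mul_nonneg (by linarith) (by linarith),
          mul_le_mul_of_nonneg_left (by linarith) (by linarith)⟩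
    refine ⟨Finset.sum_nonneg fun k _ => (hterm k).1,
      (Finset.sum_le_sum fun k _ => (hterm k).2).trans ?_⟩
    rw [← Finset.sum_mul, Finset.sum_sub_distrib, hu1]
    exact mul_le_mul_of_nonneg_right (by linarith) hD
  have h1 := hbound w (fun k => min_le_left _ _) hw1 fun k hk => hy k (.inl hk)
  have h2 := hbound w' (fun k => min_le_right _ _) hw'1 fun k hk => hy k (.inr hk)
  have hsplit : w ⬝ᵥ y - w' ⬝ᵥ y = ∑ k, (w k - v k) * (y k - c k) -
      ∑ k, (w' k - v k) * (y k - c k) := by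
    simp only [dotProduct, sub_mul, mul_sub, Finset.sum_sub_distrib] at hc ⊢
    linarith
  rw [hsplit, abs_le]
  constructor <;> linarith [h1.1, h1.2, h2.1, h2.2]

section Oscillation

variable {n K : ℕ} {C : Fin K → Finset (Fin n)} {M : Matrix (Fin n) (Fin n) ℝ}
  {y : Fin n → ℝ} {μ D : ℝ}

def OscLE (C : Fin K → Finset (Fin n)) (y : Fin n → ℝ) (D : ℝ) : Prop :=
  ∀ p, ∀ i ∈ C p, ∀ j ∈ C p, |y i - y j| ≤ D

theorem OscLE.add_of_mem_SC (hy : OscLE C y D) {s : Fin n → ℝ} (hs : s ∈ SC C) :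
    OscLE C (y + s) D := fun p i hi j hj => by
  simpa [hs p i hi j hj] using hy p i hi j hj

theorem OscLE.mulVec (hdisj : ∀ p q, p ≠ q → Disjoint (C p) (C q)) (hM : IsStochastic M)
    (hinfl : InterClusterCommonInfluence C M)
    (hsupp : ∀ p, ∀ i ∈ C p, ∀ k, 0 < M i k → ∃ q, k ∈ C q)
    (hμ : ∀ p, ∀ i ∈ C p, ∀ j ∈ C p, μ ≤ ∑ k, min (M i k) (M j k))
    (hD : 0 ≤ D) (hy : OscLE C y D) : OscLE C (M *ᵥ y) ((1 - μ) * D) := by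
  classical
  have hbase : ∀ q, ∃ m, ∀ k ∈ C q, m ≤ y k ∧ y k ≤ m + D := fun q => by
    rcases (C q).eq_empty_or_nonempty with hq | hq
    · exact ⟨0, by simp [hq]⟩
    · obtain ⟨k₀, hk₀, hmin⟩ := (C q).exists_min_image y hq
      exact ⟨y k₀, fun k hk =>
        ⟨hmin k hk, by linarith [le_abs_self (y k - y k₀), hy q k hk k₀ hk₀]⟩⟩
  choose m hm using hbase
  let c : Fin n → ℝ := fun k => ∑ q, if k ∈ C q then m q else 0
  have hc : ∀ q, ∀ k ∈ C q, c k = m q := fun q k hk => by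
    refine (Finset.sum_eq_single q (fun r _ hrq => if_neg fun hkr =>
      Finset.disjoint_left.1 (hdisj r q hrq) hkr hk) (by simp)).trans (if_pos hk)
  have hdot : ∀ r, M r ⬝ᵥ c = ∑ q, m q * ∑ k ∈ C q, M r k := fun r => by
    simp only [c, dotProduct, Finset.mul_sum, mul_ite, mul_zero]
    rw [Finset.sum_comm]
    exact Finset.sum_congr rfl fun q _ => by rw [← Finset.sum_filter]; simp [mul_comm]
  intro p i hi j hj
  refine abs_dotProduct_sub_dotProduct_le (c := c) (hM.1 i) (hM.1 j) (hM.2 i) (hM.2 j) ?_ hD ?_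
    (hμ p i hi j hj)
  · rw [hdot, hdot]
    exact Finset.sum_congr rfl fun q _ => by rw [hinfl p q i hi j hj]
  · intro k hk
    obtain ⟨q, hq⟩ := hk.elim (hsupp p i hi k) (hsupp p j hj k)
    rw [hc q k hq]
    exact hm q k hq

theorem OscLE.of_steps {f : ℕ → Fin n → ℝ} {L : ℕ} {ρ : ℝ} (hρ : 0 ≤ ρ) (hD : 0 ≤ D)
    (hstep : ∀ t D, 0 ≤ D → OscLE C (f t) D → OscLE C (f (t + 1)) D)
    (hblock : ∀ t D, 0 ≤ D → OscLE C (f t) D → OscLE C (f (t + L)) (ρ * D))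
    (h0 : OscLE C (f 0) D) (t : ℕ) : OscLE C (f t) (ρ ^ (t / L) * D) := by
  have hq : ∀ q, OscLE C (f (L * q)) (ρ ^ q * D) := by
    intro q
    induction q with
    | zero => simpa using h0
    | succ q ih =>
      rw [pow_succ, mul_comm _ ρ, mul_assoc]
      exact hblock _ _ (by positivity) ih
  have hr : ∀ q r, OscLE C (f (L * q + r)) (ρ ^ q * D) := fun q r => by
    induction r with
    | zero => exact hq q
    | succ r ih => exact hstep _ _ (by positivity) ih
  simpa only [Nat.div_add_mod] using hr (t / L) (t % L)

end Oscillation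

section PowerConvergence

variable {n : ℕ} {A M : Matrix (Fin n) (Fin n) ℝ} {S : Finset (Fin n)}

/-- An absorbing set is treated as a family with a single cluster. -/
theorem IsAbsorbing.oscLE_mulVec (hM : IsStochastic M) (hS : IsAbsorbing M S) {μ D : ℝ}
    {y : Fin n → ℝ} (hμ : ∀ i ∈ S, ∀ j ∈ S, μ ≤ ∑ k, min (M i k) (M j k)) (hD : 0 ≤ D)
    (hy : OscLE (fun _ : Fin 1 => S) y D) :
    OscLE (fun _ : Fin 1 => S) (M *ᵥ y) ((1 - μ) * D) :=
  hy.mulVec (fun p q h => absurd (Subsingleton.elim p q) h) hM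
    (fun _ _ i hi j hj => by rw [hS.sum_eq_one hM hi, hS.sum_eq_one hM hj])
    (fun _ i hi k hk => ⟨0, by_contra fun h => hk.ne' (hS i hi k h)⟩) (fun _ => hμ) hD

theorem IsAbsorbing.abs_mulVec_sub_le (hM : IsStochastic M) (hS : IsAbsorbing M S) {D : ℝ}
    {y : Fin n → ℝ} (hy : OscLE (fun _ : Fin 1 => S) y D) {e : Fin n} (he : e ∈ S) :
    |(M *ᵥ y) e - y e| ≤ D := by
  have hexp : (M *ᵥ y) e - y e = ∑ l, M e l * (y l - y e) := by
    simp only [Matrix.mulVec, dotProduct, mul_sub, Finset.sum_sub_distrib, ← Finset.sum_mul,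
      hM.2 e, one_mul]
  rw [hexp]
  refine (Finset.abs_sum_le_sum_abs _ _).trans ?_
  calc ∑ l, |M e l * (y l - y e)| ≤ ∑ l, M e l * D := Finset.sum_le_sum fun l _ => by
        rw [abs_mul, abs_of_nonneg (hM.1 e l)]
        by_cases hl : l ∈ S
        · exact mul_le_mul_of_nonneg_left (hy 0 l hl e he) (hM.1 e l)
        · simp [hS e he l hl]
    _ = D := by rw [← Finset.sum_mul, hM.2 e, one_mul]

theorem IsAbsorbing.sum_compl_pow_le_of_reaches (hA : IsStochastic A) (hS : IsAbsorbing A S)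
    {L : ℕ} {ε : ℝ} (hε1 : ε ≤ 1) (hε : ∀ i v, Reaches A v i → ε ≤ (A ^ L) i v)
    (hreach : ∀ i, ∃ e ∈ S, Reaches A e i) (t : ℕ) (x : Fin n) :
    ∑ k ∈ Sᶜ, (A ^ t) x k ≤ (1 - ε) ^ (t / L) := by
  refine hS.sum_compl_pow_le hA (sub_nonneg.2 hε1) (fun l => ?_) t x
  obtain ⟨e, he, hle⟩ := hreach l
  have hrow := (hA.pow_s8 L).2 l
  rw [← Finset.sum_add_sum_compl S] at hrow
  have := (hε l e hle).trans (Finset.single_le_sum (fun k _ => (hA.pow_s8 L).1 l k) he)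
  linarith

theorem pow_add_col_eq_mulVec (t s : ℕ) (j : Fin n) :
    (fun k => (A ^ (t + s)) k j) = A ^ s *ᵥ fun k => (A ^ t) k j := by
  ext k
  rw [add_comm, pow_add]
  rfl

/-- Column `j` of `A ^ t` flattens out on the class of `e`, which `A ^ L` scrambles through the
common column `e`. -/
theorem IsEssential.abs_pow_succ_sub_pow_le (hA : IsStochastic A) {L : ℕ} {ε : ℝ}
    (hε1 : ε ≤ 1) (hε : ∀ i v, Reaches A v i → ε ≤ (A ^ L) i v) {e : Fin n}
    (he : IsEssential A e) (j : Fin n) (t : ℕ) :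
    |(A ^ (t + 1)) e j - (A ^ t) e j| ≤ (1 - ε) ^ (t / L) := by
  classical
  set S := univ.filter (Reaches A · e)
  have hmem : ∀ {k}, k ∈ S ↔ Reaches A k e := by simp [S]
  have hS : IsAbsorbing A S := isAbsorbing_of_pos hA fun l hl k hk =>
    hmem.2 ((reaches_of_pos hk).trans (hmem.1 hl))
  have hA0 : ∀ i ∈ S, ∀ j ∈ S, (0 : ℝ) ≤ ∑ k, min (A i k) (A j k) := fun i _ j _ =>
    Finset.sum_nonneg fun k _ => le_min (hA.1 i k) (hA.1 j k)
  have hAL : ∀ i ∈ S, ∀ j ∈ S, ε ≤ ∑ k, min ((A ^ L) i k) ((A ^ L) j k) := fun i hi j hj =>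
    (le_min (hε i e (he i (hmem.1 hi))) (hε j e (he j (hmem.1 hj)))).trans <|
      Finset.single_le_sum (f := fun k => min ((A ^ L) i k) ((A ^ L) j k))
        (fun k _ => le_min ((hA.pow_s8 L).1 i k) ((hA.pow_s8 L).1 j k)) (mem_univ e)
  have hosc := OscLE.of_steps (C := fun _ : Fin 1 => S) (f := fun t k => (A ^ t) k j) (L := L)
    (sub_nonneg.2 hε1) zero_le_one
    (fun t D hD h => by
      simpa [pow_add_col_eq_mulVec t 1 j] using hS.oscLE_mulVec hA hA0 hD h)
    (fun t D hD h => by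
      simpa [pow_add_col_eq_mulVec t L j] using (hS.pow_s8 L).oscLE_mulVec (hA.pow_s8 L) hAL hD h)
    (fun _ k _ l _ => by by_cases hk : k = j <;> by_cases hl : l = j <;> simp [hk, hl]) t
  have hcol := congrFun (pow_add_col_eq_mulVec (A := A) t 1 j) e
  rw [pow_one] at hcol
  rw [hcol, ← mul_one ((1 - ε) ^ (t / L))]
  exact hS.abs_mulVec_sub_le hA hosc (hmem.2 .refl)

/-- Split `t = a + b` with `a = t / 2`: after `a` steps all but `(1 - ε) ^ (a / L)` of the mass
sits in essential classes, where the remaining `b` steps flatten the columns. -/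
theorem abs_pow_succ_sub_pow_le (hA : IsStochastic A) {L : ℕ} {ε : ℝ} (hε0 : 0 ≤ ε) (hε1 : ε ≤ 1)
    (hε : ∀ i v, Reaches A v i → ε ≤ (A ^ L) i v) (t : ℕ) (x j : Fin n) :
    |(A ^ (t + 1)) x j - (A ^ t) x j| ≤ 2 * (1 - ε) ^ (t / 2 / L) := by
  classical
  set ES := univ.filter (IsEssential A)
  have hES : IsAbsorbing A ES := isAbsorbing_of_pos hA fun l hl k hk =>
    mem_filter.2 ⟨mem_univ _, (mem_filter.1 hl).2.of_reaches (reaches_of_pos hk)⟩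
  have hreach : ∀ i, ∃ e ∈ ES, Reaches A e i := fun i => by
    obtain ⟨e, he, hei⟩ := exists_isEssential_reaches (M := A) i
    exact ⟨e, mem_filter.2 ⟨mem_univ _, he⟩, hei⟩
  set a := t / 2
  set b := t - a
  have hab : a ≤ b := by omega
  have hdiff : (A ^ (t + 1)) x j - (A ^ t) x j =
      ∑ k, (A ^ a) x k * ((A ^ (b + 1)) k j - (A ^ b) k j) := by
    have h1 : A ^ (t + 1) = A ^ a * A ^ (b + 1) := by rw [← pow_add]; congr 1; omega
    have h2 : A ^ t = A ^ a * A ^ b := by rw [← pow_add]; congr 1; omega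
    rw [h1, h2, Matrix.mul_apply, Matrix.mul_apply, ← Finset.sum_sub_distrib]
    exact Finset.sum_congr rfl fun k _ => by ring
  have hess : ∑ k ∈ ES, |(A ^ a) x k * ((A ^ (b + 1)) k j - (A ^ b) k j)| ≤ (1 - ε) ^ (b / L) :=
    calc _ ≤ ∑ k ∈ ES, (A ^ a) x k * (1 - ε) ^ (b / L) := Finset.sum_le_sum fun k hk => by
          rw [abs_mul, abs_of_nonneg ((hA.pow_s8 a).1 x k)]
          exact mul_le_mul_of_nonneg_left
            ((mem_filter.1 hk).2.abs_pow_succ_sub_pow_le hA hε1 hε j b) ((hA.pow_s8 a).1 x k)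
      _ ≤ (1 - ε) ^ (b / L) := by
          rw [← Finset.sum_mul]
          exact mul_le_of_le_one_left (pow_nonneg (sub_nonneg.2 hε1) _)
            ((hA.pow_s8 a).sum_le_one x ES)
  have hnon : ∑ k ∈ ESᶜ, |(A ^ a) x k * ((A ^ (b + 1)) k j - (A ^ b) k j)| ≤
      (1 - ε) ^ (a / L) :=
    calc _ ≤ ∑ k ∈ ESᶜ, (A ^ a) x k := Finset.sum_le_sum fun k _ => by
          rw [abs_mul, abs_of_nonneg ((hA.pow_s8 a).1 x k)]
          refine mul_le_of_le_one_right ((hA.pow_s8 a).1 x k) (abs_sub_le_iff.2 ⟨?_, ?_⟩) <;>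
            linarith [(hA.pow_s8 b).1 k j, (hA.pow_s8 (b + 1)).1 k j, (hA.pow_s8 b).le_one k j,
              (hA.pow_s8 (b + 1)).le_one k j]
      _ ≤ (1 - ε) ^ (a / L) := hES.sum_compl_pow_le_of_reaches hA hε1 hε hreach a x
  have hmono : (1 - ε) ^ (b / L) ≤ (1 - ε) ^ (a / L) :=
    pow_le_pow_of_le_one (sub_nonneg.2 hε1) (by linarith) (Nat.div_le_div_right hab)
  rw [hdiff]
  refine (Finset.abs_sum_le_sum_abs _ _).trans ?_
  rw [← Finset.sum_add_sum_compl ES]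
  linarith

theorem exists_pow_div_le_geometric {γ : ℝ} (hγ0 : 0 ≤ γ) (hγ1 : γ < 1) {L : ℕ} (hL : 0 < L) :
    ∃ c ρ : ℝ, 0 ≤ c ∧ 0 ≤ ρ ∧ ρ < 1 ∧ ∀ t, γ ^ (t / L) ≤ c * ρ ^ t := by
  set γ' := max γ (1 / 2)
  have hγ'0 : 0 < γ' := lt_max_of_lt_right one_half_pos
  have hγ'1 : γ' < 1 := max_lt hγ1 (by norm_num)
  set ρ := γ' ^ ((L : ℝ)⁻¹)
  have hρL : ρ ^ L = γ' := Real.rpow_inv_natCast_pow hγ'0.le hL.ne'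
  have hρ0 : 0 < ρ := Real.rpow_pos_of_pos hγ'0 _
  have hρ1 : ρ < 1 := Real.rpow_lt_one hγ'0.le hγ'1 (by positivity)
  refine ⟨γ'⁻¹, ρ, inv_nonneg.2 hγ'0.le, hρ0.le, hρ1, fun t => ?_⟩
  calc γ ^ (t / L) ≤ γ' ^ (t / L) := pow_le_pow_left₀ hγ0 (le_max_left _ _) _
    _ = γ'⁻¹ * (ρ ^ (L * (t / L)) * γ') := by
        rw [pow_mul, hρL]
        field_simp
    _ ≤ γ'⁻¹ * (ρ ^ (L * (t / L)) * ρ ^ (t % L)) := by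
        gcongr
        rw [← hρL]
        exact pow_le_pow_of_le_one hρ0.le hρ1.le (Nat.mod_lt t hL).le
    _ = γ'⁻¹ * ρ ^ t := by rw [← pow_add, Nat.div_add_mod]

theorem exists_tendsto_pow_of_diag_pos (hA : IsStochastic A) (hdiag : ∀ i, 0 < A i i) :
    ∃ P : Matrix (Fin n) (Fin n) ℝ, Tendsto (fun t => A ^ t) atTop (𝓝 P) ∧
      ∃ c ρ : ℝ, 0 ≤ c ∧ 0 ≤ ρ ∧ ρ < 1 ∧ ∀ t i j, |(A ^ t) i j - P i j| ≤ c * ρ ^ t := by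
  obtain ⟨L, hL, ε, hε0, hε1, hε⟩ := exists_pow_ge_of_reaches hA hdiag
  obtain ⟨c, ρ, hc, hρ0, hρ1, hρ⟩ :=
    exists_pow_div_le_geometric (sub_nonneg.2 hε1) (sub_lt_self 1 hε0) (Nat.mul_pos two_pos hL)
  have hstep : ∀ i j t, dist ((A ^ t) i j) ((A ^ (t + 1)) i j) ≤ 2 * c * ρ ^ t := fun i j t => by
    have hρt := hρ t
    rw [← Nat.div_div_eq_div_mul] at hρt
    rw [Real.dist_eq, abs_sub_comm, mul_assoc]
    exact (abs_pow_succ_sub_pow_le hA hε0.le hε1 hε t i j).trans (by gcongr)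
  have hlim : ∀ i j, ∃ p, Tendsto (fun t => (A ^ t) i j) atTop (𝓝 p) := fun i j =>
    cauchySeq_tendsto_of_complete (cauchySeq_of_le_geometric ρ (2 * c) hρ1 (hstep i j))
  choose P hP using hlim
  refine ⟨Matrix.of P, tendsto_pi_nhds.2 fun i => tendsto_pi_nhds.2 fun j => hP i j,
    2 * c / (1 - ρ), ρ, by have := sub_pos.2 hρ1; positivity, hρ0, hρ1, fun t i j => ?_⟩
  rw [← Real.dist_eq]
  convert dist_le_of_le_geometric_of_tendsto ρ (2 * c) hρ1 (hstep i j) (hP i j) t using 1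
  · rfl
  · ring

theorem mul_eq_of_tendsto_pow {P : Matrix (Fin n) (Fin n) ℝ}
    (h : Tendsto (fun t => A ^ t) atTop (𝓝 P)) : P * A = P := by
  have h1 : Tendsto (fun t => A ^ t * A) atTop (𝓝 (P * A)) :=
    ((continuous_id.matrix_mul continuous_const).tendsto P).comp h
  have h2 : Tendsto (fun t => A ^ t * A) atTop (𝓝 P) :=
    (h.comp (tendsto_add_atTop_nat 1)).congr fun t => pow_succ A t
  exact tendsto_nhds_unique h1 h2

end PowerConvergence

section PeriodicLimit

theorem exists_periodic_tendsto_dist {E : Type*} [MetricSpace E] [CompleteSpace E]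
    {x : ℕ → E} {T : ℕ} (hT : 0 < T) {c ρ : ℝ} (hρ0 : 0 ≤ ρ) (hρ1 : ρ < 1)
    (hx : ∀ t, dist (x t) (x (t + T)) ≤ c * ρ ^ t) :
    ∃ v : ℕ → E, (∀ t, v (t + T) = v t) ∧ Tendsto (fun t => dist (x t) (v t)) atTop (𝓝 0) := by
  have hρT : ρ ^ T < 1 := pow_lt_one₀ hρ0 hρ1 hT.ne'
  have hinc : ∀ t m, dist (x (t + T * m)) (x (t + T * (m + 1))) ≤ c * ρ ^ t * (ρ ^ T) ^ m :=
    fun t m => by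
      rw [mul_add, mul_one, ← add_assoc, mul_assoc, ← pow_mul, ← pow_add]
      exact hx _
  have hlim : ∀ t, ∃ l, Tendsto (fun m => x (t + T * m)) atTop (𝓝 l) := fun t =>
    cauchySeq_tendsto_of_complete (cauchySeq_of_le_geometric _ _ hρT (hinc t))
  choose v hv using hlim
  refine ⟨v, fun t => tendsto_nhds_unique (hv (t + T)) ?_, ?_⟩
  · refine ((hv t).comp (tendsto_add_atTop_nat 1)).congr fun m => ?_
    simp only [Function.comp, mul_add, mul_one]
    ring_nf
  · have hbound : ∀ t, dist (x t) (v t) ≤ c * ρ ^ t / (1 - ρ ^ T) := fun t => by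
      simpa using dist_le_of_le_geometric_of_tendsto₀ (ρ ^ T) (c * ρ ^ t) hρT (hinc t) (hv t)
    refine squeeze_zero (fun t => dist_nonneg) hbound ?_
    simpa using ((tendsto_pow_atTop_nhds_zero_of_lt_one hρ0 hρ1).const_mul c).div_const
      (1 - ρ ^ T)

variable {n : ℕ} {A M : Matrix (Fin n) (Fin n) ℝ}

theorem abs_mulVec_apply_le {b : ℝ} {i : Fin n} (hM : ∀ k, |M i k| ≤ b) (z : Fin n → ℝ) :
    |(M *ᵥ z) i| ≤ b * ∑ k, |z k| := by
  simp only [Matrix.mulVec, dotProduct, Finset.mul_sum]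
  refine (Finset.abs_sum_le_sum_abs _ _).trans (Finset.sum_le_sum fun k _ => ?_)
  rw [abs_mul]
  exact mul_le_mul_of_nonneg_right (hM k) (abs_nonneg _)

theorem exists_periodic_tendsto_of_isStochastic (hA : IsStochastic A) (hdiag : ∀ i, 0 < A i i)
    {T : ℕ} (hT : 0 < T) {I x : ℕ → Fin n → ℝ} (hIper : ∀ t, I (t + T) = I t)
    (hIsum : ∑ k ∈ range T, I k = 0) (hx : ∀ t, x (t + 1) = A *ᵥ x t + I t) :
    ∃ v : ℕ → Fin n → ℝ, (∀ t, v (t + T) = v t) ∧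
      Tendsto (fun t => dist (x t) (v t)) atTop (𝓝 0) := by
  obtain ⟨P, hP, c, ρ, hc, hρ0, hρ1, hPc⟩ := exists_tendsto_pow_of_diag_pos hA hdiag
  have hPA := mul_eq_of_tendsto_pow hP
  set z := x 0 - x T
  have hz : ∀ t, x t - x (t + T) = A ^ t *ᵥ z := by
    intro t
    induction t with
    | zero => simp [z]
    | succ t ih =>
      rw [pow_succ', ← Matrix.mulVec_mulVec, ← ih, add_right_comm, hx, hx, hIper,
        Matrix.mulVec_sub]
      abel
  have hPx : ∀ t, P *ᵥ x t = P *ᵥ x 0 + P *ᵥ ∑ k ∈ range t, I k := by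
    intro t
    induction t with
    | zero => simp
    | succ t ih =>
      rw [hx, Matrix.mulVec_add, Matrix.mulVec_mulVec, hPA, ih, Finset.sum_range_succ,
        Matrix.mulVec_add, add_assoc]
  have hPz : P *ᵥ z = 0 := by
    rw [Matrix.mulVec_sub, hPx T, hIsum, Matrix.mulVec_zero, add_zero, sub_self]
  refine exists_periodic_tendsto_dist hT hρ0 hρ1 (c := c * ∑ k, |z k|) fun t => ?_
  rw [dist_eq_norm, hz, ← sub_zero (A ^ t *ᵥ z), ← hPz, ← Matrix.sub_mulVec]
  refine (pi_norm_le_iff_of_nonneg (by positivity)).2 fun i => ?_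
  rw [Real.norm_eq_abs, mul_right_comm]
  exact abs_mulVec_apply_le (fun k => hPc t i k) z

end PeriodicLimit

section Clusters

variable {n K : ℕ} {C : Fin K → Finset (Fin n)} {A M N : Matrix (Fin n) (Fin n) ℝ}

theorem IsClustering.sum_eq_sum_sum (hC : IsClustering C) (f : Fin n → ℝ) :
    ∑ i, f i = ∑ p, ∑ i ∈ C p, f i := by
  classical
  rw [← Finset.sum_biUnion fun p _ q _ hpq => hC.1 p q hpq]
  congr 1
  ext i
  simpa using hC.2 i

theorem mulVec_mem_SC (hC : IsClustering C) (hM : InterClusterCommonInfluence C M)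
    {y : Fin n → ℝ} (hy : y ∈ SC C) : M *ᵥ y ∈ SC C := by
  intro p i hi j hj
  simp only [Matrix.mulVec, dotProduct]
  rw [hC.sum_eq_sum_sum, hC.sum_eq_sum_sum]
  refine Finset.sum_congr rfl fun q _ => ?_
  rcases (C q).eq_empty_or_nonempty with hq | ⟨k₀, hk₀⟩
  · simp [hq]
  · have hconst : ∀ r, ∑ k ∈ C q, M r k * y k = (∑ k ∈ C q, M r k) * y k₀ := fun r => by
      rw [Finset.sum_mul]
      exact Finset.sum_congr rfl fun k hk => by rw [hy q k hk k₀ hk₀]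
    rw [hconst, hconst, hM p q i hi j hj]

theorem interClusterCommonInfluence_one (hC : IsClustering C) :
    InterClusterCommonInfluence C (1 : Matrix (Fin n) (Fin n) ℝ) := by
  intro p q i hi j hj
  simp only [Matrix.one_apply, Finset.sum_ite_eq]
  by_cases hpq : p = q
  · subst hpq
    simp [hi, hj]
  · simp [Finset.disjoint_left.1 (hC.1 p q hpq) hi, Finset.disjoint_left.1 (hC.1 p q hpq) hj]

theorem InterClusterCommonInfluence.mul_s8 (hC : IsClustering C)
    (hM : InterClusterCommonInfluence C M) (hN : InterClusterCommonInfluence C N) :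
    InterClusterCommonInfluence C (M * N) := by
  intro p q i hi j hj
  have hcol : ∀ r, ∑ k ∈ C q, (M * N) r k = (M *ᵥ fun l => ∑ k ∈ C q, N l k) r := fun r => by
    simp only [Matrix.mul_apply, Matrix.mulVec, dotProduct, Finset.mul_sum]
    exact Finset.sum_comm
  rw [hcol, hcol]
  exact mulVec_mem_SC hC hM (fun r l hl l' hl' => hN r q l hl l' hl') p i hi j hj

theorem InterClusterCommonInfluence.pow_s8 (hC : IsClustering C)
    (hM : InterClusterCommonInfluence C M) : ∀ m, InterClusterCommonInfluence C (M ^ m)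
  | 0 => by rw [pow_zero]; exact interClusterCommonInfluence_one hC
  | m + 1 => by rw [pow_succ]; exact (hM.pow_s8 hC m).mul_s8 hC hM

theorem exists_mem_SC_eq_pow_mulVec_add (hC : IsClustering C)
    (hA : InterClusterCommonInfluence C A) {I x : ℕ → Fin n → ℝ} (hI : ∀ t, I t ∈ SC C)
    (hx : ∀ t, x (t + 1) = A *ᵥ x t + I t) (t s : ℕ) :
    ∃ d ∈ SC C, x (t + s) = A ^ s *ᵥ x t + d := by
  induction s with
  | zero => exact ⟨0, fun _ _ _ _ _ => rfl, by simp⟩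
  | succ s ih =>
    obtain ⟨d, hd, hxd⟩ := ih
    refine ⟨A *ᵥ d + I (t + s), fun p i hi j hj => ?_, ?_⟩
    · simp only [Pi.add_apply, mulVec_mem_SC hC hA hd p i hi j hj, hI (t + s) p i hi j hj]
    · rw [← add_assoc, hx, hxd, Matrix.mulVec_add, Matrix.mulVec_mulVec, ← pow_succ', add_assoc]

theorem HasClusterSpanningTrees.le_sum_min_pow (hspan : HasClusterSpanningTrees C A)
    (hA : IsStochastic A) {L : ℕ} {ε : ℝ} (hε : ∀ i v, Reaches A v i → ε ≤ (A ^ L) i v) :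
    ∀ p, ∀ i ∈ C p, ∀ j ∈ C p, ε ≤ ∑ k, min ((A ^ L) i k) ((A ^ L) j k) := fun p i hi j hj => by
  obtain ⟨v, hv⟩ := hspan p
  exact (le_min (hε i v (hv i hi)) (hε j v (hv j hj))).trans <|
    Finset.single_le_sum (f := fun k => min ((A ^ L) i k) ((A ^ L) j k))
      (fun k _ => le_min ((hA.pow_s8 L).1 i k) ((hA.pow_s8 L).1 j k)) (mem_univ v)

theorem tendsto_abs_sub_of_mem_cluster (hC : IsClustering C) (hA : IsStochastic A)
    (hinfl : InterClusterCommonInfluence C A) (hspan : HasClusterSpanningTrees C A)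
    (hdiag : ∀ i, 0 < A i i) {I x : ℕ → Fin n → ℝ} (hI : ∀ t, I t ∈ SC C)
    (hx : ∀ t, x (t + 1) = A *ᵥ x t + I t) {p : Fin K} {i j : Fin n} (hi : i ∈ C p)
    (hj : j ∈ C p) : Tendsto (fun t => |x t i - x t j|) atTop (𝓝 0) := by
  obtain ⟨L, hL, ε, hε0, hε1, hε⟩ := exists_pow_ge_of_reaches hA hdiag
  have hsupp : ∀ {M : Matrix (Fin n) (Fin n) ℝ}, ∀ p, ∀ i ∈ C p, ∀ k, 0 < M i k → ∃ q, k ∈ C q :=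
    fun _ _ _ k _ => hC.2 k
  have hA0 : ∀ p, ∀ i ∈ C p, ∀ j ∈ C p, (0 : ℝ) ≤ ∑ k, min (A i k) (A j k) := fun _ i _ j _ =>
    Finset.sum_nonneg fun k _ => le_min (hA.1 i k) (hA.1 j k)
  set D₀ := ∑ q : Fin n × Fin n, |x 0 q.1 - x 0 q.2|
  have hD₀ : 0 ≤ D₀ := Finset.sum_nonneg fun _ _ => abs_nonneg _
  have hosc := OscLE.of_steps (C := C) (f := x) (L := L) (sub_nonneg.2 hε1) hD₀
    (fun t D hD h => by
      obtain ⟨d, hd, hxd⟩ := exists_mem_SC_eq_pow_mulVec_add hC hinfl hI hx t 1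
      rw [hxd, pow_one]
      simpa using (h.mulVec hC.1 hA hinfl hsupp hA0 hD).add_of_mem_SC hd)
    (fun t D hD h => by
      obtain ⟨d, hd, hxd⟩ := exists_mem_SC_eq_pow_mulVec_add hC hinfl hI hx t L
      rw [hxd]
      exact (h.mulVec hC.1 (hA.pow_s8 L) (hinfl.pow_s8 hC L) hsupp (hspan.le_sum_min_pow hA hε) hD).add_of_mem_SC hd)
    (fun _ i _ j _ => Finset.single_le_sum (f := fun q : Fin n × Fin n => |x 0 q.1 - x 0 q.2|)
      (fun _ _ => abs_nonneg _) (mem_univ (i, j)))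
  refine squeeze_zero (fun t => abs_nonneg _) (fun t => hosc t p i hi j hj) ?_
  simpa using (((tendsto_pow_atTop_nhds_zero_of_lt_one (sub_nonneg.2 hε1) (sub_lt_self 1 hε0)).comp
    (Nat.tendsto_div_const_atTop hL.ne')).mul_const D₀)

end Clusters

theorem stmt8 {n K : ℕ} (C : Fin K → Finset (Fin n)) (hC : IsClustering C)
    (A : Matrix (Fin n) (Fin n) ℝ) (hA : IsStochastic A)
    (hinfl : InterClusterCommonInfluence C A)
    (hspan : HasClusterSpanningTrees C A)
    (hdiag : ∀ i, 0 < A i i)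
    (T : ℕ) (hT : 1 ≤ T)
    (u : ℕ → ℝ) (hu : ∀ t, u (t + T) = u t)
    (husum : ∑ k ∈ Finset.range T, u k = 0)
    (α : Fin K → ℝ)
    (I : ℕ → Fin n → ℝ)
    (hI : ∀ t p, ∀ i ∈ C p, I t i = α p * u t)
    (x : ℕ → Fin n → ℝ)
    (hx : ∀ t, x (t + 1) = A.mulVec (x t) + I t) :
    ∃ v : Fin K → ℕ → ℝ, (∀ p t, v p (t + T) = v p t) ∧
      ∀ p, ∀ j ∈ C p, Tendsto (fun t => |x t j - v p t|) atTop (𝓝 0) := by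
  have hIper : ∀ t, I (t + T) = I t := fun t => funext fun i => by
    obtain ⟨p, hp⟩ := hC.2 i
    rw [hI _ p i hp, hI t p i hp, hu]
  have hIsum : ∑ k ∈ Finset.range T, I k = 0 := funext fun i => by
    obtain ⟨p, hp⟩ := hC.2 i
    rw [Finset.sum_apply, Finset.sum_congr rfl fun k _ => hI k p i hp, ← Finset.mul_sum, husum,
      mul_zero, Pi.zero_apply]
  have hISC : ∀ t, I t ∈ SC C := fun t p i hi j hj => by rw [hI t p i hi, hI t p j hj]
  obtain ⟨v, hvT, hv⟩ := exists_periodic_tendsto_of_isStochastic hA hdiag hT hIper hIsum hx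
  refine ⟨fun p t => if h : (C p).Nonempty then v t h.choose else 0,
    fun p t => by simp only [hvT], fun p j hj => ?_⟩
  have hne : (C p).Nonempty := ⟨j, hj⟩
  have hsync := tendsto_abs_sub_of_mem_cluster hC hA hinfl hspan hdiag hISC hx hj hne.choose_spec
  simp only [dif_pos hne]
  refine squeeze_zero (fun t => abs_nonneg _) (fun t => (abs_sub_le _ (x t hne.choose) _).trans
    (add_le_add le_rfl ((Real.dist_eq _ _).symm.trans_le (dist_le_pi_dist _ _ hne.choose)))) ?_
  simpa using hsync.add hv
end

section
/- Let B be a K×K stochastic matrix with all diagonal entries positive, let T ≥ 1 be an integer, and let u : ℕ → ℝ be T-periodic (u(k+T) = u(k) for all k) with Σ_{k=0}^{T−1} u(k) = 0. Then the limit Z_2 = lim_{n→∞} Σ_{k=0}^{nT} B^{nT−k} u(k) exists in the space of K×K real matrices. -/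
/-!
Write `b m = (B ^ m) p q`. Periodicity of `u` and `∑_{k<T} u k = 0` make the `N`-th increment of
the sequence equal to `∑_{k<T} u k * (b (N * T + (T - k)) - b (N * T))`, so the sequence converges
as soon as `b` has summable increments.

For `B` this is spectral. Over `ℂ`, `B` is a contraction in the sup norm, so its powers are bounded
and the eigenvalue `1` is semisimple. Gershgorin's disc around a positive diagonal entry `B i i`
has radius `1 - B i i`, so it meets the unit circle only at `1`: every other eigenvalue has modulus
`< 1`, and its generalized eigenvectors decay geometrically under `B`.
-/

open Finset Filter Topology Matrix

namespace Complex

lemma eq_one_or_norm_lt_one_of_norm_sub_ofReal_le {z : ℂ} {a : ℝ} (ha : 0 < a)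
    (h : ‖z - a‖ ≤ 1 - a) : z = 1 ∨ ‖z‖ < 1 := by
  by_contra! ⟨hz1, hz⟩
  have ha1 : a ≤ 1 := by linarith [norm_nonneg (z - a)]
  have hout : 1 ≤ z.re ^ 2 + z.im ^ 2 := by
    have := Complex.sq_norm z
    rw [normSq_apply] at this
    nlinarith
  have hdisk : (z.re - a) ^ 2 + z.im ^ 2 ≤ (1 - a) ^ 2 := by
    have := Complex.sq_norm (z - a)
    rw [normSq_apply, sub_re, sub_im, ofReal_re, ofReal_im, sub_zero] at this
    nlinarith [pow_le_pow_left₀ (norm_nonneg _) h 2]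
  have hre_ge : 1 ≤ z.re := by nlinarith
  have hre : z.re = 1 := by nlinarith [sq_nonneg z.im]
  have him : z.im = 0 := by nlinarith
  exact hz1 (Complex.ext hre him)

end Complex

namespace Module.End

section NormedField

variable {𝕜 E : Type*} [NormedField 𝕜] [NormedAddCommGroup E] [NormedSpace 𝕜 E]
  {f : Module.End 𝕜 E}

lemma exists_norm_pow_apply_le_geometric {μ : 𝕜} {ρ : ℝ} (hμρ : ‖μ‖ < ρ) :
    ∀ {k : ℕ} {x : E}, ((f - μ • 1) ^ k) x = 0 → ∃ C, ∀ m : ℕ, ‖(f ^ m) x‖ ≤ C * ρ ^ m := by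
  intro k
  induction k with
  | zero =>
    intro x hx
    rw [pow_zero, one_apply] at hx
    exact ⟨0, fun m => by simp [hx]⟩
  | succ k ih =>
    intro x hx
    set y := (f - μ • 1) x
    obtain ⟨C₀, hC₀⟩ := ih (x := y) (by rwa [← mul_apply, ← pow_succ])
    have hρ : 0 < ρ := (norm_nonneg μ).trans_lt hμρ
    set C := max ‖x‖ (C₀ / (ρ - ‖μ‖))
    -- `C₀ ≤ (ρ - ‖μ‖) * C` is what lets the bound `C * ρ ^ m` propagate
    have hC : ‖μ‖ * C + C₀ ≤ ρ * C := by
      have := (div_le_iff₀ (sub_pos.2 hμρ)).1 (le_max_right ‖x‖ (C₀ / (ρ - ‖μ‖)))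
      linarith
    refine ⟨C, fun m => ?_⟩
    induction m with
    | zero => simp [C]
    | succ m ihm =>
      have hstep : (f ^ (m + 1)) x = μ • (f ^ m) x + (f ^ m) y := by
        rw [pow_succ, mul_apply, ← map_smul, ← map_add]
        simp [y]
      calc ‖(f ^ (m + 1)) x‖ ≤ ‖μ‖ * ‖(f ^ m) x‖ + ‖(f ^ m) y‖ := by
            rw [hstep, ← norm_smul]
            exact norm_add_le _ _
        _ ≤ ‖μ‖ * (C * ρ ^ m) + C₀ * ρ ^ m := by gcongr; exact hC₀ m
        _ ≤ C * ρ ^ (m + 1) := by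
            rw [pow_succ]
            nlinarith [pow_pos hρ m]

end NormedField

section RCLike

variable {𝕜 E : Type*} [RCLike 𝕜] [NormedAddCommGroup E] [NormedSpace 𝕜 E]
  {f : Module.End 𝕜 E}

lemma apply_eq_self_of_pow_sub_one_apply_eq_zero (hf : ∀ x, ∃ C, ∀ m : ℕ, ‖(f ^ m) x‖ ≤ C) :
    ∀ {k : ℕ} {x : E}, ((f - 1) ^ k) x = 0 → f x = x := by
  intro k
  induction k with
  | zero =>
    intro x hx
    rw [pow_zero, one_apply] at hx
    rw [hx, map_zero]
  | succ k ih =>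
    intro x hx
    set y := (f - 1) x
    have hfy : f y = y := ih (by rwa [← mul_apply, ← pow_succ])
    have hfx : f x = x + y := by simp [y]
    have hpow : ∀ m : ℕ, (f ^ m) x = x + (m : 𝕜) • y := by
      intro m
      induction m with
      | zero => simp
      | succ m ihm =>
        rw [pow_succ', mul_apply, ihm, map_add, map_smul, hfy, hfx]
        push_cast
        module
    obtain ⟨C, hC⟩ := hf x
    have hy : y = 0 := by
      by_contra hy
      obtain ⟨m, hm⟩ := exists_nat_gt ((C + ‖x‖) / ‖y‖)
      have hle : m * ‖y‖ ≤ C + ‖x‖ := by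
        calc m * ‖y‖ = ‖(f ^ m) x - x‖ := by rw [hpow, add_sub_cancel_left, norm_smul,
                RCLike.norm_natCast]
          _ ≤ C + ‖x‖ := (norm_sub_le _ _).trans (by gcongr; exact hC m)
      rw [div_lt_iff₀ (norm_pos_iff.2 hy)] at hm
      linarith
    rwa [hy, add_zero] at hfx

end RCLike

variable {E : Type*} [NormedAddCommGroup E] [NormedSpace ℂ E] {f : Module.End ℂ E}

lemma summable_norm_pow_succ_apply_sub_of_mem_maxGenEigenspace
    (hf : ∀ x, ∃ C, ∀ m : ℕ, ‖(f ^ m) x‖ ≤ C) (heig : ∀ μ, f.HasEigenvalue μ → μ = 1 ∨ ‖μ‖ < 1)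
    {μ : ℂ} {x : E} (hx : x ∈ f.maxGenEigenspace μ) :
    Summable fun m : ℕ => ‖(f ^ (m + 1)) x - (f ^ m) x‖ := by
  rcases eq_or_ne x 0 with rfl | hx0
  · simp
  obtain ⟨k, hk⟩ := (mem_maxGenEigenspace f μ x).1 hx
  have hμ : f.HasEigenvalue μ :=
    HasUnifEigenvalue.lt zero_lt_one (Submodule.ne_bot_iff _ |>.2 ⟨x, hx, hx0⟩)
  rcases heig μ hμ with rfl | hμ1
  · have hfx : f x = x := apply_eq_self_of_pow_sub_one_apply_eq_zero hf (by simpa using hk)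
    simp [pow_apply, Function.iterate_fixed hfx]
  · obtain ⟨C, hC⟩ := exists_norm_pow_apply_le_geometric (ρ := (‖μ‖ + 1) / 2) (by linarith) hk
    have hsum : Summable fun m : ℕ => ‖(f ^ m) x‖ :=
      .of_nonneg_of_le (fun _ => norm_nonneg _) hC
        ((summable_geometric_of_lt_one (by positivity) (by linarith)).mul_left C)
    exact .of_nonneg_of_le (fun _ => norm_nonneg _) (fun m => norm_sub_le _ _)
      (((summable_nat_add_iff 1).2 hsum).add hsum)

lemma summable_norm_pow_succ_apply_sub [FiniteDimensional ℂ E]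
    (hf : ∀ x, ∃ C, ∀ m : ℕ, ‖(f ^ m) x‖ ≤ C) (heig : ∀ μ, f.HasEigenvalue μ → μ = 1 ∨ ‖μ‖ < 1)
    (x : E) : Summable fun m : ℕ => ‖(f ^ (m + 1)) x - (f ^ m) x‖ := by
  have hx : x ∈ ⨆ μ, f.maxGenEigenspace μ := by
    rw [iSup_maxGenEigenspace_eq_top]
    trivial
  refine Submodule.iSup_induction (motive := fun x => Summable fun m : ℕ =>
      ‖(f ^ (m + 1)) x - (f ^ m) x‖) _ hx
    (fun μ x hx => summable_norm_pow_succ_apply_sub_of_mem_maxGenEigenspace hf heig hx)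
    (by simp) (fun x y hx hy => ?_)
  refine (hx.add hy).of_nonneg_of_le (fun _ => norm_nonneg _) fun m => ?_
  rw [map_add, map_add, add_sub_add_comm]
  exact norm_add_le _ _

end Module.End

namespace IsStochastic

variable {n : ℕ} {B : Matrix (Fin n) (Fin n) ℝ}

lemma norm_map_ofReal_mulVec_le (hB : IsStochastic B) (x : Fin n → ℂ) :
    ‖B.map Complex.ofReal *ᵥ x‖ ≤ ‖x‖ := by
  refine (pi_norm_le_iff_of_nonneg (norm_nonneg x)).2 fun i => ?_
  calc ‖(B.map Complex.ofReal *ᵥ x) i‖ ≤ ∑ j, ‖(B i j : ℂ) * x j‖ := by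
        simp only [mulVec, dotProduct, map_apply]
        exact norm_sum_le _ _
    _ ≤ ∑ j, B i j * ‖x‖ := by
        gcongr with j
        rw [norm_mul, Complex.norm_real, Real.norm_of_nonneg (hB.1 i j)]
        exact mul_le_mul_of_nonneg_left (norm_le_pi_norm x j) (hB.1 i j)
    _ = ‖x‖ := by rw [← sum_mul, hB.2 i, one_mul]

lemma eq_one_or_norm_lt_one_of_hasEigenvalue (hB : IsStochastic B) (hdiag : ∀ i, 0 < B i i)
    {μ : ℂ} (hμ : Module.End.HasEigenvalue (toLin' (B.map Complex.ofReal)) μ) :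
    μ = 1 ∨ ‖μ‖ < 1 := by
  obtain ⟨i, hi⟩ := eigenvalue_mem_ball hμ
  have hradius : ∑ j ∈ univ.erase i, ‖B.map Complex.ofReal i j‖ = 1 - B i i := by
    simp only [map_apply, Complex.norm_real, Real.norm_of_nonneg (hB.1 i _)]
    rw [sum_erase_eq_sub (mem_univ i), hB.2 i]
  rw [hradius, Metric.mem_closedBall, dist_eq_norm] at hi
  exact Complex.eq_one_or_norm_lt_one_of_norm_sub_ofReal_le (hdiag i) hi

lemma summable_abs_pow_succ_apply_sub (hB : IsStochastic B) (hdiag : ∀ i, 0 < B i i)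
    (p q : Fin n) : Summable fun m : ℕ => |(B ^ (m + 1)) p q - (B ^ m) p q| := by
  obtain ⟨f, hf⟩ : ∃ f : Module.End ℂ (Fin n → ℂ), f = toLin' (B.map Complex.ofReal) := ⟨_, rfl⟩
  have hcontr : ∀ (m : ℕ) x, ‖(f ^ m) x‖ ≤ ‖x‖ := by
    intro m
    induction m with
    | zero => simp
    | succ m ih =>
      intro x
      rw [pow_succ', Module.End.mul_apply, hf, toLin'_apply, ← hf]
      exact (hB.norm_map_ofReal_mulVec_le _).trans (ih x)
  have hentry : ∀ m : ℕ, (f ^ m) (Pi.single q 1) p = (B ^ m) p q := by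
    intro m
    have hmap : B.map Complex.ofReal ^ m = (B ^ m).map Complex.ofReal :=
      (Matrix.map_pow B Complex.ofRealHom m).symm
    rw [hf, ← toLin'_pow, hmap, toLin'_apply, mulVec_single_one]
    rfl
  have hsum := Module.End.summable_norm_pow_succ_apply_sub (fun x => ⟨‖x‖, fun m => hcontr m x⟩)
    (fun μ => hf ▸ hB.eq_one_or_norm_lt_one_of_hasEigenvalue hdiag) (Pi.single q 1)
  refine hsum.of_nonneg_of_le (fun _ => abs_nonneg _) fun m => ?_
  calc |(B ^ (m + 1)) p q - (B ^ m) p q|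
      = ‖((f ^ (m + 1)) (Pi.single q 1) - (f ^ m) (Pi.single q 1)) p‖ := by
        rw [Pi.sub_apply, hentry, hentry, ← Complex.ofReal_sub, Complex.norm_real,
          Real.norm_eq_abs]
    _ ≤ _ := norm_le_pi_norm _ p

end IsStochastic

section PeriodicConvolution

variable {u b : ℕ → ℝ} {T : ℕ}

lemma sum_range_mul_periodic_succ_sub (hu : Function.Periodic u T)
    (husum : ∑ k ∈ range T, u k = 0) (N : ℕ) :
    ∑ k ∈ range ((N + 1) * T + 1), u k * b ((N + 1) * T - k)
      - ∑ k ∈ range (N * T + 1), u k * b (N * T - k)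
      = ∑ k ∈ range T, u k * (b (N * T + (T - k)) - b (N * T)) := by
  have hsplit : ∑ k ∈ range ((N + 1) * T + 1), u k * b ((N + 1) * T - k)
      = ∑ k ∈ range T, u k * b (N * T + (T - k))
        + ∑ k ∈ range (N * T + 1), u k * b (N * T - k) := by
    rw [show (N + 1) * T + 1 = T + (N * T + 1) by ring, sum_range_add]
    congr 1
    · refine sum_congr rfl fun k hk => ?_
      rw [mem_range] at hk
      congr 2
      rw [add_mul, one_mul]
      omega
    · refine sum_congr rfl fun k _ => ?_
      rw [add_comm T k, hu k]
      congr 2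
      rw [add_mul, one_mul]
      omega
  simp only [hsplit, mul_sub, sum_sub_distrib, ← sum_mul, husum, zero_mul, sub_zero,
    add_sub_cancel_right]

lemma abs_sub_le_sum_range_abs_sub (b : ℕ → ℝ) {a j T : ℕ} (hj : j ≤ T) :
    |b (a + j) - b a| ≤ ∑ i ∈ range T, |b (a + i + 1) - b (a + i)| := by
  calc |b (a + j) - b a| ≤ ∑ i ∈ range j, |b (a + i + 1) - b (a + i)| := by
        simpa [Real.dist_eq, abs_sub_comm, add_assoc] using
          dist_le_range_sum_dist (fun i => b (a + i)) j
    _ ≤ _ := sum_le_sum_of_subset_of_nonneg (range_subset_range.2 hj) fun _ _ _ => abs_nonneg _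

lemma exists_tendsto_sum_range_mul_of_periodic (hu : Function.Periodic u T)
    (husum : ∑ k ∈ range T, u k = 0) (hb : Summable fun i => |b (i + 1) - b i|) :
    ∃ z, Tendsto (fun N : ℕ => ∑ k ∈ range (N * T + 1), u k * b (N * T - k)) atTop (𝓝 z) := by
  set W : ℕ → ℝ := fun N => ∑ i ∈ range T, |b (N * T + i + 1) - b (N * T + i)|
  have hW : Summable W := by
    refine summable_sum fun i hi => hb.comp_injective (i := fun N => N * T + i) fun N N' h => ?_
    exact Nat.eq_of_mul_eq_mul_right (pos_of_gt (mem_range.1 hi)) (Nat.add_right_cancel h)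
  refine cauchySeq_tendsto_of_complete <|
    cauchySeq_of_dist_le_of_summable _ (fun N => ?_) (hW.mul_left (∑ k ∈ range T, |u k|))
  rw [dist_comm, Real.dist_eq, Nat.succ_eq_add_one, sum_range_mul_periodic_succ_sub hu husum,
    sum_mul]
  refine (abs_sum_le_sum_abs _ _).trans (sum_le_sum fun k hk => ?_)
  rw [abs_mul]
  exact mul_le_mul_of_nonneg_left (abs_sub_le_sum_range_abs_sub b (by omega)) (abs_nonneg _)

end PeriodicConvolution

theorem stmt10_general {K : ℕ} (B : Matrix (Fin K) (Fin K) ℝ)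
    (hB : IsStochastic B) (hdiag : ∀ p, 0 < B p p)
    (T : ℕ)
    (u : ℕ → ℝ) (hu : ∀ k, u (k + T) = u k)
    (husum : ∑ k ∈ Finset.range T, u k = 0) :
    ∃ Z : Matrix (Fin K) (Fin K) ℝ, ∀ p q,
      Tendsto
        (fun N : ℕ => ∑ k ∈ Finset.range (N * T + 1), u k * (B ^ (N * T - k)) p q)
        atTop (𝓝 (Z p q)) := by
  choose Z hZ using fun p q =>
    exists_tendsto_sum_range_mul_of_periodic (b := fun m => (B ^ m) p q) hu husum
      (hB.summable_abs_pow_succ_apply_sub hdiag p q)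
  exact ⟨Matrix.of Z, hZ⟩

theorem stmt10 {K : ℕ} (B : Matrix (Fin K) (Fin K) ℝ)
    (hB : IsStochastic B) (hdiag : ∀ p, 0 < B p p)
    (T : ℕ) (hT : 1 ≤ T)
    (u : ℕ → ℝ) (hu : ∀ k, u (k + T) = u k)
    (husum : ∑ k ∈ Finset.range T, u k = 0) :
    ∃ Z : Matrix (Fin K) (Fin K) ℝ, ∀ p q,
      Tendsto
        (fun N : ℕ => ∑ k ∈ Finset.range (N * T + 1), u k * (B ^ (N * T - k)) p q)
        atTop (𝓝 (Z p q)) :=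
  stmt10_general B hB hdiag T u hu husum
end
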